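/- arXiv:1905.08837 — 2 statements merged into one kernel-verified Lean document; each statement's English description precedes it below -/
import Mathlib

section
/- Let φ = ϑ∘f be fully subamenable at x̄ and v̄ ∈ ∂φ(x̄). Then ∂φ(x̄) = ∂_p φ(x̄), i.e., every limiting subgradient of φ at x̄ is a proximal subgradient, and the domain of the second subderivative equals the critical cone: dom d²φ(x̄, v̄) = K_φ(x̄, v̄) := {w ∈ ℝⁿ : dφ(x̄)(w) = ⟨v̄, w⟩}. -/
open Filter Topology Metric Set

noncomputable section

abbrev Euc (n : ℕ) := EuclideanSpace ℝ (Fin n)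

def edom {X : Type*} (φ : X → EReal) : Set X := {x | φ x ≠ ⊤}

section NormedDefs

variable {X Y : Type*} [NormedAddCommGroup X] [NormedSpace ℝ X]
  [NormedAddCommGroup Y] [NormedSpace ℝ Y]

/-- Bouligand (contingent) tangent cone. -/
def tangentConeB (Ω : Set X) (x : X) : Set X :=
  {w | ∃ t : ℕ → ℝ, ∃ wk : ℕ → X, (∀ k, 0 < t k) ∧ Tendsto t atTop (𝓝 0) ∧
      Tendsto wk atTop (𝓝 w) ∧ ∀ k, x + t k • wk k ∈ Ω}

/-- Second-order tangent set. -/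
def secondTangent (Ω : Set X) (x w : X) : Set X :=
  {u | ∃ t : ℕ → ℝ, ∃ uk : ℕ → X, (∀ k, 0 < t k) ∧ Tendsto t atTop (𝓝 0) ∧
      Tendsto uk atTop (𝓝 u) ∧ ∀ k, x + t k • w + ((t k) ^ 2 / 2) • uk k ∈ Ω}

/-- Subderivative (first-order epi-derivative). -/
def subderiv (φ : X → EReal) (x w : X) : EReal :=
  liminf (fun p : ℝ × X => ((p.1⁻¹ : ℝ) : EReal) * (φ (x + p.1 • p.2) - φ x))
    ((𝓝[>] (0:ℝ)) ×ˢ 𝓝 w)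

/-- `f` is twice differentiable at `x`: differentiable nearby and its derivative is
differentiable at `x`. -/
def TwiceDiffAt (f : X → Y) (x : X) : Prop :=
  (∀ᶠ y in 𝓝 x, DifferentiableAt ℝ f y) ∧ DifferentiableAt ℝ (fderiv ℝ f) x

/-- The second derivative of `f` at `x` evaluated at `(w, w)`. -/
def D2 (f : X → Y) (x w : X) : Y := fderiv ℝ (fderiv ℝ f) x w w

/-- Lipschitz continuity of `φ` around `x` relative to its domain, with constant `ℓ`. -/
def LipRelDom (φ : X → EReal) (x : X) (ℓ : ℝ) : Prop :=
  ∃ U ∈ 𝓝 x, ∀ y ∈ U, ∀ z ∈ U, φ y ≠ ⊤ → φ z ≠ ⊤ →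
    φ y ≤ φ z + ((ℓ * ‖y - z‖ : ℝ) : EReal)

/-- Metric subregularity of the mapping `x ↦ f x - D` at `(x, 0)` with constant `κ`:
the metric subregularity qualification condition. -/
def MSQCAt (f : X → Y) (D : Set Y) (x : X) (κ : ℝ) : Prop :=
  0 ≤ κ ∧ ∀ᶠ u in 𝓝 x, Metric.infDist u (f ⁻¹' D) ≤ κ * Metric.infDist (f u) D

/-- Epigraph of an extended-real-valued function. -/
def epiSet (ϑ : Y → EReal) : Set (Y × ℝ) := {p | ϑ p.1 ≤ (p.2 : EReal)}

end NormedDefs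

section InnerDefs

variable {X : Type*} [NormedAddCommGroup X] [InnerProductSpace ℝ X]

/-- Regular (Fréchet) subdifferential. -/
def frechetSubdiff (φ : X → EReal) (x : X) : Set X :=
  {v | ∀ ε : ℝ, 0 < ε → ∀ᶠ y in 𝓝 x,
      φ x + (((inner ℝ v (y - x) : ℝ) - ε * ‖y - x‖ : ℝ) : EReal) ≤ φ y}

/-- Limiting (Mordukhovich) subdifferential. -/
def limSubdiff (φ : X → EReal) (x : X) : Set X :=
  {v | ∃ xk : ℕ → X, ∃ vk : ℕ → X, Tendsto xk atTop (𝓝 x) ∧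
      Tendsto (fun k => φ (xk k)) atTop (𝓝 (φ x)) ∧
      Tendsto vk atTop (𝓝 v) ∧ ∀ k, vk k ∈ frechetSubdiff φ (xk k)}

/-- Proximal subdifferential. -/
def proxSubdiff (φ : X → EReal) (x : X) : Set X :=
  {v | ∃ r > (0:ℝ), ∃ γ > (0:ℝ), ∀ y ∈ Metric.ball x γ,
      φ x + (((inner ℝ v (y - x) : ℝ) - r / 2 * ‖y - x‖ ^ 2 : ℝ) : EReal) ≤ φ y}

/-- Second-order difference quotient. -/
def quadDiff (φ : X → EReal) (x v : X) (t : ℝ) (u : X) : EReal :=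
  ((2 / t ^ 2 : ℝ) : EReal) * (φ (x + t • u) - φ x - ((t * (inner ℝ v u : ℝ) : ℝ) : EReal))

/-- Second subderivative of `φ` at `x` for `v`. -/
def secondSubderiv (φ : X → EReal) (x v w : X) : EReal :=
  liminf (fun p : ℝ × X => quadDiff φ x v p.1 p.2) ((𝓝[>] (0:ℝ)) ×ˢ 𝓝 w)

/-- Parabolic subderivative of `φ` at `x` for `w` with respect to `z`. -/
def parabolicSubderiv (φ : X → EReal) (x w z : X) : EReal :=
  liminf (fun p : ℝ × X =>
      ((2 / p.1 ^ 2 : ℝ) : EReal) *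
        (φ (x + p.1 • w + (p.1 ^ 2 / 2) • p.2) - φ x - (p.1 : EReal) * subderiv φ x w))
    ((𝓝[>] (0:ℝ)) ×ˢ 𝓝 z)

/-- Critical cone of `φ` at `x` for `v`. -/
def critCone (φ : X → EReal) (x v : X) : Set X :=
  {w | subderiv φ x w = ((inner ℝ v w : ℝ) : EReal)}

/-- Convex polyhedral set. -/
def IsPolyhedral (Ω : Set X) : Prop :=
  ∃ (k : ℕ) (c : Fin k → X) (b : Fin k → ℝ), Ω = {x | ∀ i, (inner ℝ (c i) x : ℝ) ≤ b i}

/-- Polar cone. -/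
def polarCone (C : Set X) : Set X := {y | ∀ u ∈ C, (inner ℝ y u : ℝ) ≤ 0}

/-- A piecewise linear-quadratic representation of `ϑ`. -/
structure PLQRepr (ϑ : X → EReal) where
  s : ℕ
  piece : Fin s → Set X
  A : Fin s → (X →L[ℝ] X)
  a : Fin s → X
  cst : Fin s → ℝ
  poly : ∀ i, IsPolyhedral (piece i)
  symm : ∀ i x y, (inner ℝ (A i x) y : ℝ) = (inner ℝ x (A i y) : ℝ)
  dom_eq : edom ϑ = ⋃ i, piece i
  val : ∀ i, ∀ x ∈ piece i,
    ϑ x = ((1 / 2 * (inner ℝ (A i x) x : ℝ) + (inner ℝ (a i) x : ℝ) + cst i : ℝ) : EReal)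

/-- `ϑ` is piecewise linear-quadratic. -/
def IsPLQ (ϑ : X → EReal) : Prop := Nonempty (PLQRepr ϑ)

/-- Twice epi-differentiability of `φ` at `x` for `v`, via the recovery-sequence
characterization of epi-convergence of second-order difference quotients. -/
def TwiceEpiDiffAt (φ : X → EReal) (x v : X) : Prop :=
  ∀ w : X, ∀ t : ℕ → ℝ, (∀ k, 0 < t k) → Tendsto t atTop (𝓝 0) →
    ∃ wk : ℕ → X, Tendsto wk atTop (𝓝 w) ∧
      Tendsto (fun k => quadDiff φ x v (t k) (wk k)) atTop (𝓝 (secondSubderiv φ x v w))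

end InnerDefs

/-- Convexity for extended-real-valued functions. -/
def ERealConvexOn {X : Type*} [AddCommGroup X] [Module ℝ X] (φ : X → EReal) : Prop :=
  ∀ x y : X, ∀ t : ℝ, 0 ≤ t → t ≤ 1 →
    φ (t • x + (1 - t) • y) ≤ (t : EReal) * φ x + ((1 - t : ℝ) : EReal) * φ y

/-- The Lagrange multiplier set associated with `(x, v)` for the composition `ϑ ∘ f`. -/
def multSet {n m : ℕ} (f : Euc n → Euc m) (ϑ : Euc m → EReal) (x : Euc n) (v : Euc n) :
    Set (Euc m) :=
  {lam | lam ∈ limSubdiff ϑ (f x) ∧ ContinuousLinearMap.adjoint (fderiv ℝ f x) lam = v}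

/-!
Near `xb`, `f` is Lipschitz with a quadratic Taylor remainder, and the convex piecewise
linear-quadratic `ϑ` is Lipschitz relative to its domain on bounded sets, because it is a single
quadratic on a short initial piece of any segment in its domain. Metric
subregularity moves a point `p` near `xb` to some `z` with `f z ∈ dom ϑ` and
`‖z - p‖ ≲ κ ‖f p - c‖` for any `c ∈ dom ϑ`, at the price `ℓ ‖f z - c‖` in the value of `ϑ`.

For a regular subgradient `v` at `x` and `y` near `xb`, apply this to `p = x + t (y - x)` and the
chord point `c = f x + t (f y - f x)`, use convexity of `ϑ` along the chord and let `t ↓ 0`: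
`φ y ≥ φ x + ⟪v, y - x⟫ - C ‖∇f x (y - x) - (f y - f x)‖`. Letting `x` run through a sequence that
defines a limiting subgradient and bounding the defect by the Taylor remainder at `xb` gives a
proximal inequality.

A finite second subderivative gives `dφ(xb) w ≤ ⟪v, w⟫`, and a proximal subgradient the reverse.
Conversely, if `dφ(xb) w = ⟪v, w⟫` then `dϑ(f xb)(∇f xb w) ≤ ⟪v, w⟫`, so `∇f xb w` is tangent to
`dom ϑ`; as `dom ϑ` is a finite union of polyhedra, the ray `f xb + τ ∇f xb w` stays in one
piece, on which `ϑ` is a quadratic in `τ` with slope at most `⟪v, w⟫`. Correcting `xb + τ w` by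
subregularity yields directions `u → w` along which the second-order difference quotients stay
bounded.
-/

open scoped RealInnerProductSpace

section Limits

lemma coe_mul_sub_eq_coe_toReal {a b : EReal} (ha : a ≠ ⊤) (ha' : a ≠ ⊥) (hb : b ≠ ⊤) (hb' : b ≠ ⊥)
    (c : ℝ) : (c : EReal) * (a - b) = ((c * (a.toReal - b.toReal) : ℝ) : EReal) := by
  rw [← EReal.coe_toReal ha ha', ← EReal.coe_toReal hb hb', ← EReal.coe_sub, ← EReal.coe_mul]
  simp

lemma coe_mul_top_sub_eq_top {b : EReal} (hb : b ≠ ⊤) (hb' : b ≠ ⊥) {c : ℝ} (hc : 0 < c) :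
    (c : EReal) * (⊤ - b) = ⊤ := by
  rw [← EReal.coe_toReal hb hb', EReal.top_sub_coe]
  exact EReal.coe_mul_top_of_pos hc

lemma coe_le_liminf_of_tendsto {α : Type*} {l : Filter α} [l.NeBot] {g : α → EReal}
    {h : α → ℝ} {L : ℝ} (hh : Tendsto h l (𝓝 L)) (hle : ∀ᶠ p in l, (h p : EReal) ≤ g p) :
    (L : EReal) ≤ liminf g l :=
  (EReal.tendsto_coe.2 hh).liminf_eq ▸ liminf_le_liminf hle

lemma liminf_le_coe_of_tendsto {α : Type*} {l : Filter α} [l.NeBot] {g : α → EReal}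
    {h : α → ℝ} {L : ℝ} (hh : Tendsto h l (𝓝 L)) (hle : ∀ᶠ p in l, g p ≤ (h p : EReal)) :
    liminf g l ≤ (L : EReal) :=
  (EReal.tendsto_coe.2 hh).liminf_eq ▸ liminf_le_liminf hle

lemma nhdsGT_prod_le_nhds {X : Type*} [TopologicalSpace X] (w : X) :
    𝓝[>] (0:ℝ) ×ˢ 𝓝 w ≤ 𝓝 ((0:ℝ), w) := by
  rw [nhds_prod_eq]
  exact prod_mono nhdsWithin_le_nhds le_rfl

lemma tendsto_add_smul_nhdsGT_prod {X : Type*} [NormedAddCommGroup X] [NormedSpace ℝ X]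
    (x w : X) :
    Tendsto (fun p : ℝ × X => x + p.1 • p.2) (𝓝[>] (0:ℝ) ×ˢ 𝓝 w) (𝓝 x) := by
  simpa using tendsto_const_nhds.add ((tendsto_fst.mono_right nhdsWithin_le_nhds).smul
    (tendsto_snd (f := 𝓝[>] (0:ℝ)) (g := 𝓝 w)))

lemma liminf_le_of_eventually_exists {X : Type*} [NormedAddCommGroup X] {g : ℝ × X → EReal}
    {w : X} {M B : ℝ}
    (h : ∀ᶠ τ in 𝓝[>] (0:ℝ), ∃ u, ‖u - w‖ ≤ M * τ ∧ g (τ, u) ≤ B) :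
    liminf g (𝓝[>] (0:ℝ) ×ˢ 𝓝 w) ≤ B := by
  obtain ⟨u, hu⟩ := h.choice
  have hut : Tendsto u (𝓝[>] (0:ℝ)) (𝓝 w) := by
    have hM : Tendsto (fun τ : ℝ => M * τ) (𝓝[>] 0) (𝓝 0) := by
      simpa using ((continuous_const_mul M).tendsto 0).mono_left nhdsWithin_le_nhds
    exact tendsto_iff_norm_sub_tendsto_zero.2
      (squeeze_zero' (.of_forall fun _ => norm_nonneg _) (hu.mono fun τ hτ => hτ.1) hM)
  exact liminf_le_of_frequently_le
    ((tendsto_id.prodMk hut).frequently (hu.mono fun τ hτ => hτ.2).frequently)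

end Limits

lemma ERealConvexOn.add_smul_sub_ne_top_and_toReal_le {X : Type*} [AddCommGroup X] [Module ℝ X]
    {ϑ : X → EReal} (hconv : ERealConvexOn ϑ) (hbot : ∀ y, ϑ y ≠ ⊥) {p q : X} (hp : ϑ p ≠ ⊤)
    (hq : ϑ q ≠ ⊤) {t : ℝ} (ht0 : 0 ≤ t) (ht1 : t ≤ 1) :
    ϑ (p + t • (q - p)) ≠ ⊤ ∧
      (ϑ (p + t • (q - p))).toReal ≤ (1 - t) * (ϑ p).toReal + t * (ϑ q).toReal := by
  have h := hconv q p t ht0 ht1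
  rw [show t • q + (1 - t) • p = p + t • (q - p) by module, ← EReal.coe_toReal hp (hbot p),
    ← EReal.coe_toReal hq (hbot q), ← EReal.coe_mul, ← EReal.coe_mul, ← EReal.coe_add] at h
  have hne : ϑ (p + t • (q - p)) ≠ ⊤ := ne_top_of_le_ne_top (EReal.coe_ne_top _) h
  refine ⟨hne, ?_⟩
  rw [← EReal.coe_toReal hne (hbot _), EReal.coe_le_coe_iff] at h
  linarith

section Subdifferentials

variable {X : Type*} [NormedAddCommGroup X] [InnerProductSpace ℝ X]

lemma quadDiff_eq_coe {φ : X → EReal} {x v u : X} {t : ℝ} (h : φ (x + t • u) ≠ ⊤)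
    (h' : φ (x + t • u) ≠ ⊥) (hx : φ x ≠ ⊤) (hx' : φ x ≠ ⊥) :
    quadDiff φ x v t u =
      ((2 / t ^ 2 * ((φ (x + t • u)).toReal - (φ x).toReal - t * ⟪v, u⟫) : ℝ) : EReal) := by
  rw [quadDiff, ← EReal.coe_toReal h h', ← EReal.coe_toReal hx hx', ← EReal.coe_sub,
    ← EReal.coe_sub, ← EReal.coe_mul]
  simp

lemma quadDiff_eq_top {φ : X → EReal} {x v u : X} {t : ℝ} (ht : t ≠ 0)
    (h : φ (x + t • u) = ⊤) (hx : φ x ≠ ⊤) (hx' : φ x ≠ ⊥) : quadDiff φ x v t u = ⊤ := by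
  rw [quadDiff, h, ← EReal.coe_toReal hx hx', EReal.top_sub_coe, EReal.top_sub_coe]
  exact EReal.coe_mul_top_of_pos (by positivity)

lemma proxSubdiff_subset_frechetSubdiff (φ : X → EReal) (x : X) :
    proxSubdiff φ x ⊆ frechetSubdiff φ x := by
  rintro v ⟨r, hr, γ, hγ, H⟩ ε hε
  filter_upwards [ball_mem_nhds x (lt_min hγ (by positivity : 0 < 2 * ε / r))] with y hy
  rw [mem_ball, dist_eq_norm, lt_min_iff, lt_div_iff₀ hr] at hy
  refine le_trans (add_le_add le_rfl (EReal.coe_le_coe_iff.2 ?_))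
    (H y (mem_ball_iff_norm.2 hy.1))
  nlinarith [norm_nonneg (y - x)]

lemma frechetSubdiff_subset_limSubdiff (φ : X → EReal) (x : X) :
    frechetSubdiff φ x ⊆ limSubdiff φ x :=
  fun v hv => ⟨fun _ => x, fun _ => v, tendsto_const_nhds, tendsto_const_nhds,
    tendsto_const_nhds, fun _ => hv⟩

lemma inner_le_subderiv_of_mem_proxSubdiff {φ : X → EReal} (hbot : ∀ y, φ y ≠ ⊥) {x v : X}
    (hx : φ x ≠ ⊤) (hv : v ∈ proxSubdiff φ x) (w : X) : (⟪v, w⟫ : EReal) ≤ subderiv φ x w := by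
  obtain ⟨r, -, γ, hγ, H⟩ := hv
  have hlim : Tendsto (fun p : ℝ × X => ⟪v, p.2⟫ - r / 2 * p.1 * ‖p.2‖ ^ 2)
      (𝓝[>] 0 ×ˢ 𝓝 w) (𝓝 ⟪v, w⟫) := by
    refine (Continuous.tendsto' ?_ (0, w) _ (by simp)).mono_left (nhdsGT_prod_le_nhds w)
    fun_prop
  refine coe_le_liminf_of_tendsto hlim ?_
  filter_upwards [tendsto_fst.eventually self_mem_nhdsWithin,
    (tendsto_add_smul_nhdsGT_prod x w).eventually (ball_mem_nhds x hγ)] with ⟨t, u⟩ (ht : 0 < t) hu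
  by_cases htop : φ (x + t • u) = ⊤
  · rw [htop, coe_mul_top_sub_eq_top hx (hbot x) (inv_pos.2 ht)]
    exact le_top
  have h := H _ hu
  rw [← EReal.coe_toReal hx (hbot x), ← EReal.coe_toReal htop (hbot _), ← EReal.coe_add,
    EReal.coe_le_coe_iff, add_sub_cancel_left, real_inner_smul_right, norm_smul,
    Real.norm_of_nonneg ht.le] at h
  rw [coe_mul_sub_eq_coe_toReal htop (hbot _) hx (hbot x), EReal.coe_le_coe_iff, le_inv_mul_iff₀ ht]
  nlinarith

lemma subderiv_le_inner_of_secondSubderiv_ne_top {φ : X → EReal} (hbot : ∀ y, φ y ≠ ⊥)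
    {x v w : X} (hx : φ x ≠ ⊤) (h : secondSubderiv φ x v w ≠ ⊤) :
    subderiv φ x w ≤ ⟪v, w⟫ := by
  obtain ⟨M, hM, -⟩ := EReal.lt_iff_exists_real_btwn.1 (lt_top_iff_ne_top.2 h)
  set S := {p : ℝ × X | quadDiff φ x v p.1 p.2 < M}
  have : (𝓝[>] (0:ℝ) ×ˢ 𝓝 w ⊓ 𝓟 S).NeBot :=
    frequently_iff_neBot.1 (frequently_lt_of_liminf_lt (h := hM))
  have hlim : Tendsto (fun p : ℝ × X => ⟪v, p.2⟫ + M * p.1 / 2) (𝓝[>] 0 ×ˢ 𝓝 w ⊓ 𝓟 S)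
      (𝓝 ⟪v, w⟫) := by
    refine (Continuous.tendsto' ?_ (0, w) _ (by simp)).mono_left
      (inf_le_left.trans (nhdsGT_prod_le_nhds w))
    fun_prop
  refine (liminf_le_liminf_of_le inf_le_left).trans (liminf_le_coe_of_tendsto hlim ?_)
  filter_upwards [mem_inf_of_left (tendsto_fst.eventually self_mem_nhdsWithin),
    mem_inf_of_right (mem_principal_self S)] with ⟨t, u⟩ (ht : 0 < t) (hq : quadDiff φ x v t u < M)
  have htop : φ (x + t • u) ≠ ⊤ := fun htop => by
    rw [quadDiff_eq_top ht.ne' htop hx (hbot x)] at hq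
    exact not_top_lt hq
  rw [quadDiff_eq_coe htop (hbot _) hx (hbot x), EReal.coe_lt_coe_iff, div_mul_eq_mul_div,
    div_lt_iff₀ (by positivity)] at hq
  rw [coe_mul_sub_eq_coe_toReal htop (hbot _) hx (hbot x), EReal.coe_le_coe_iff, inv_mul_le_iff₀ ht]
  nlinarith

lemma coe_le_subderiv_of_lipschitz {φ : X → EReal} (hbot : ∀ z, φ z ≠ ⊥) {y d : X}
    (hy : φ y ≠ ⊤) {ℓ : ℝ}
    (hlip : ∀ a ∈ edom φ ∩ closedBall y 1, ∀ b ∈ edom φ ∩ closedBall y 1,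
      (φ a).toReal ≤ (φ b).toReal + ℓ * ‖a - b‖)
    {α β : ℝ} (hray : ∀ᶠ τ in 𝓝[>] (0:ℝ),
      φ (y + τ • d) ≠ ⊤ ∧ (φ y).toReal + τ * α + τ ^ 2 * β ≤ (φ (y + τ • d)).toReal) :
    (α : EReal) ≤ subderiv φ y d := by
  have ht : Tendsto (fun p : ℝ × X => p.1) (𝓝[>] 0 ×ˢ 𝓝 d) (𝓝 0) :=
    tendsto_fst.mono_right nhdsWithin_le_nhds
  have hlim : Tendsto (fun p : ℝ × X => α + p.1 * β - ℓ * ‖p.2 - d‖) (𝓝[>] 0 ×ˢ 𝓝 d) (𝓝 α) := by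
    refine (Continuous.tendsto' ?_ (0, d) α (by simp)).mono_left (nhdsGT_prod_le_nhds d)
    fun_prop
  have hd : Tendsto (fun p : ℝ × X => y + p.1 • d) (𝓝[>] 0 ×ˢ 𝓝 d) (𝓝 y) := by
    simpa using tendsto_const_nhds.add (ht.smul_const d)
  refine coe_le_liminf_of_tendsto hlim ?_
  filter_upwards [tendsto_fst.eventually hray, tendsto_fst.eventually self_mem_nhdsWithin,
    hd.eventually (closedBall_mem_nhds y one_pos),
    (tendsto_add_smul_nhdsGT_prod y d).eventually (closedBall_mem_nhds y one_pos)]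
    with ⟨t, u⟩ ⟨hne, hval⟩ (ht : 0 < t) hd1 hu1
  by_cases htop : φ (y + t • u) = ⊤
  · rw [htop, coe_mul_top_sub_eq_top hy (hbot y) (inv_pos.2 ht)]
    exact le_top
  rw [coe_mul_sub_eq_coe_toReal htop (hbot _) hy (hbot y), EReal.coe_le_coe_iff, le_inv_mul_iff₀ ht]
  have hl := hlip _ ⟨hne, hd1⟩ _ ⟨htop, hu1⟩
  rw [show y + t • d - (y + t • u) = t • (d - u) by module, norm_smul, Real.norm_of_nonneg ht.le,
    norm_sub_rev] at hl
  nlinarith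

end Subdifferentials

section TangentCones

variable {X : Type*} [NormedAddCommGroup X] [InnerProductSpace ℝ X]

lemma mem_tangentConeB_of_frequently {Ω : Set X} {x d : X}
    (h : ∃ᶠ p in 𝓝[>] (0:ℝ) ×ˢ 𝓝 d, x + p.1 • p.2 ∈ Ω) : d ∈ tangentConeB Ω x := by
  have := frequently_iff_neBot.1 h
  obtain ⟨p, hp⟩ := exists_seq_tendsto (𝓝[>] (0:ℝ) ×ˢ 𝓝 d ⊓ 𝓟 {p | x + p.1 • p.2 ∈ Ω})
  have hpF := hp.mono_right inf_le_left
  have hev : ∀ᶠ k in atTop, 0 < (p k).1 ∧ x + (p k).1 • (p k).2 ∈ Ω :=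
    ((tendsto_fst.comp hpF).eventually self_mem_nhdsWithin).and
      (hp.eventually (mem_inf_of_right (mem_principal_self _)))
  obtain ⟨ψ, hψ, hall⟩ := extraction_of_eventually_atTop hev
  have hlim := hpF.comp hψ.tendsto_atTop
  exact ⟨fun k => (p (ψ k)).1, fun k => (p (ψ k)).2, fun k => (hall k).1,
    (tendsto_fst.comp hlim).mono_right nhdsWithin_le_nhds, tendsto_snd.comp hlim,
    fun k => (hall k).2⟩

lemma mem_tangentConeB_edom_of_subderiv_ne_top {φ : X → EReal} {y d : X} (hy : φ y ≠ ⊤)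
    (hy' : φ y ≠ ⊥) (h : subderiv φ y d ≠ ⊤) : d ∈ tangentConeB (edom φ) y := by
  refine mem_tangentConeB_of_frequently ?_
  have hfreq := frequently_lt_of_liminf_lt (h := lt_top_iff_ne_top.2 h)
  refine (hfreq.and_eventually (tendsto_fst.eventually self_mem_nhdsWithin)).mono ?_
  rintro p ⟨hlt, hp⟩ htop
  rw [htop, coe_mul_top_sub_eq_top hy hy' (inv_pos.2 hp)] at hlt
  exact lt_irrefl _ hlt

lemma IsPolyhedral.isClosed {P : Set X} (h : IsPolyhedral P) : IsClosed P := by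
  obtain ⟨k, c, b, rfl⟩ := h
  simp only [ofPred_forall]
  exact isClosed_iInter fun i => isClosed_le (continuous_const.inner continuous_id) continuous_const

lemma IsPolyhedral.eventually_add_smul_mem {P : Set X} (hP : IsPolyhedral P) {p d : X}
    (hp : p ∈ P) (hd : d ∈ tangentConeB P p) : ∀ᶠ τ in 𝓝[≥] (0:ℝ), p + τ • d ∈ P := by
  obtain ⟨k, c, b, rfl⟩ := hP
  obtain ⟨t, dk, ht0, -, hdk, hmem⟩ := hd
  simp only [mem_ofPred_eq, inner_add_right, real_inner_smul_right] at hp hmem ⊢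
  refine eventually_all.2 fun i => ?_
  rcases (hp i).lt_or_eq with hlt | heq
  · have hc : Tendsto (fun τ : ℝ => ⟪c i, p⟫ + τ * ⟪c i, d⟫) (𝓝[≥] 0) (𝓝 ⟪c i, p⟫) := by
      refine (Continuous.tendsto' ?_ 0 _ (by simp)).mono_left nhdsWithin_le_nhds
      fun_prop
    exact (hc.eventually (gt_mem_nhds hlt)).mono fun τ h => h.le
  · -- an active constraint stays satisfied because `d` points into its half-space
    have hdir : ⟪c i, d⟫ ≤ 0 := by
      refine le_of_tendsto' (((continuous_const.inner continuous_id).tendsto d).comp hdk)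
        fun j => ?_
      have h := hmem j i
      rw [heq] at h
      exact nonpos_of_mul_nonpos_right (by simpa using h) (ht0 j)
    filter_upwards [self_mem_nhdsWithin] with τ (hτ : 0 ≤ τ)
    nlinarith

end TangentCones

lemma subderiv_le_subderiv_comp {E F : Type*} [NormedAddCommGroup E] [NormedSpace ℝ E]
    [NormedAddCommGroup F] [NormedSpace ℝ F] {f : E → F} {ϑ : F → EReal} {x : E}
    (hf : DifferentiableAt ℝ f x) (w : E) :
    subderiv ϑ (f x) (fderiv ℝ f x w) ≤ subderiv (fun z => ϑ (f z)) x w := by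
  have ht : ∀ᶠ p in 𝓝[>] (0:ℝ) ×ˢ 𝓝 w, 0 < p.1 := tendsto_fst.eventually self_mem_nhdsWithin
  have hm : Tendsto (fun p : ℝ × E => (p.1, p.1⁻¹ • (f (x + p.1 • p.2) - f x)))
      (𝓝[>] 0 ×ˢ 𝓝 w) (𝓝[>] 0 ×ˢ 𝓝 (fderiv ℝ f x w)) := by
    refine tendsto_fst.prodMk ((hf.hasFDerivAt.hasFDerivWithinAt (s := univ)).lim ?_
      (.of_forall fun _ => mem_univ _) ?_)
    · simpa using (tendsto_fst.mono_right nhdsWithin_le_nhds).smul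
        (tendsto_snd (f := 𝓝[>] (0:ℝ)) (g := 𝓝 w))
    · refine tendsto_snd.congr' (ht.mono fun p hp => ?_)
      simp [smul_smul, inv_mul_cancel₀ hp.ne']
  refine hm.liminf_le_liminf_comp.trans_eq (liminf_congr (ht.mono fun p hp => ?_))
  simp [smul_smul, mul_inv_cancel₀ hp.ne']

namespace PLQRepr

variable {X : Type*} [NormedAddCommGroup X] [InnerProductSpace ℝ X] {ϑ : X → EReal}

def quad (R : PLQRepr ϑ) (i : Fin R.s) (y : X) : ℝ := 1 / 2 * ⟪R.A i y, y⟫ + ⟪R.a i, y⟫ + R.cst i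

lemma toReal_eq_quad (R : PLQRepr ϑ) {i : Fin R.s} {y : X} (hy : y ∈ R.piece i) :
    (ϑ y).toReal = R.quad i y := by
  rw [R.val i y hy, EReal.toReal_coe, quad]

lemma quad_add_smul (R : PLQRepr ϑ) (i : Fin R.s) (y d : X) (τ : ℝ) :
    R.quad i (y + τ • d) =
      R.quad i y + τ * ⟪R.A i y + R.a i, d⟫ + τ ^ 2 * (1 / 2 * ⟪R.A i d, d⟫) := by
  have hsymm : ⟪R.A i d, y⟫ = ⟪R.A i y, d⟫ := by rw [R.symm, real_inner_comm]
  simp only [quad, map_add, map_smul, inner_add_left, inner_add_right, real_inner_smul_left,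
    real_inner_smul_right, hsymm]
  ring

lemma mem_edom_of_mem_piece (R : PLQRepr ϑ) {i : Fin R.s} {y : X} (hy : y ∈ R.piece i) :
    y ∈ edom ϑ := by
  rw [R.dom_eq]
  exact mem_iUnion_of_mem i hy

lemma exists_piece_eventually_add_smul_mem (R : PLQRepr ϑ) {y d : X}
    (hd : d ∈ tangentConeB (edom ϑ) y) :
    ∃ i, y ∈ R.piece i ∧ ∀ᶠ τ in 𝓝[≥] (0:ℝ), y + τ • d ∈ R.piece i := by
  obtain ⟨t, dk, ht0, ht, hdk, hmem⟩ := hd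
  simp only [R.dom_eq, mem_iUnion] at hmem
  obtain ⟨i, hi⟩ : ∃ i, ∃ᶠ k in atTop, y + t k • dk k ∈ R.piece i := by
    by_contra! h
    obtain ⟨k, hk⟩ := (eventually_all.2 h : ∀ᶠ k in atTop, ∀ i, _).exists
    obtain ⟨i, hi⟩ := hmem k
    exact hk i hi
  obtain ⟨ψ, hψ, hψmem⟩ := extraction_of_frequently_atTop hi
  have htψ := ht.comp hψ.tendsto_atTop
  have hdψ := hdk.comp hψ.tendsto_atTop
  have hlim : Tendsto (fun k => y + t (ψ k) • dk (ψ k)) atTop (𝓝 y) := by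
    simpa using tendsto_const_nhds.add (htψ.smul hdψ)
  have hy : y ∈ R.piece i := (R.poly i).isClosed.mem_of_tendsto hlim (.of_forall hψmem)
  exact ⟨i, hy, (R.poly i).eventually_add_smul_mem hy ⟨_, _, fun k => ht0 _, htψ, hdψ, hψmem⟩⟩

lemma toReal_le_add_of_add_smul_sub_mem_piece (R : PLQRepr ϑ) (hconv : ERealConvexOn ϑ)
    (hbot : ∀ y, ϑ y ≠ ⊥) {y z : X} (hy : ϑ y ≠ ⊤) (hz : ϑ z ≠ ⊤) {M : ℝ} (hyM : ‖y‖ ≤ M)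
    (hzM : ‖z‖ ≤ M) {i : Fin R.s} (hyi : y ∈ R.piece i) {τ : ℝ} (hτ0 : 0 < τ) (hτ1 : τ ≤ 1)
    (hτi : y + τ • (z - y) ∈ R.piece i) :
    (ϑ y).toReal ≤ (ϑ z).toReal + (2 * ‖R.A i‖ * M + ‖R.a i‖) * ‖y - z‖ := by
  have hcvx := (hconv.add_smul_sub_ne_top_and_toReal_le hbot hy hz hτ0.le hτ1).2
  rw [R.toReal_eq_quad hτi, R.quad_add_smul, ← R.toReal_eq_quad hyi] at hcvx
  set d := z - y
  have hd : ‖d‖ ≤ 2 * M := (norm_sub_le z y).trans (by linarith)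
  have hA : 0 ≤ ‖R.A i‖ := norm_nonneg _
  have hlin : -⟪R.A i y + R.a i, d⟫ ≤ (‖R.A i‖ * M + ‖R.a i‖) * ‖d‖ := by
    have hAy : ‖R.A i y‖ ≤ ‖R.A i‖ * M :=
      ((R.A i).le_opNorm y).trans (mul_le_mul_of_nonneg_left hyM hA)
    refine (neg_le_abs _).trans ((abs_real_inner_le_norm _ _).trans ?_)
    gcongr
    exact (norm_add_le _ _).trans (by linarith)
  have hquad : -(τ * (1 / 2 * ⟪R.A i d, d⟫)) ≤ ‖R.A i‖ * M * ‖d‖ := by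
    have hAd : -⟪R.A i d, d⟫ ≤ ‖R.A i‖ * (2 * M) * ‖d‖ := by
      refine (neg_le_abs _).trans ((abs_real_inner_le_norm _ _).trans ?_)
      gcongr
      exact ((R.A i).le_opNorm d).trans (by gcongr)
    have hM0 : 0 ≤ M := (norm_nonneg y).trans hyM
    calc -(τ * (1 / 2 * ⟪R.A i d, d⟫)) = τ / 2 * -⟪R.A i d, d⟫ := by ring
      _ ≤ τ / 2 * (‖R.A i‖ * (2 * M) * ‖d‖) := by gcongr
      _ ≤ 1 / 2 * (‖R.A i‖ * (2 * M) * ‖d‖) := by gcongr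
      _ = ‖R.A i‖ * M * ‖d‖ := by ring
  -- divide the convexity inequality along the segment by `τ`
  have hstep : (ϑ y).toReal - (ϑ z).toReal ≤
      -⟪R.A i y + R.a i, d⟫ - τ * (1 / 2 * ⟪R.A i d, d⟫) := by
    by_contra! hc
    nlinarith [mul_pos hτ0 (sub_pos.2 hc)]
  rw [norm_sub_rev]
  linarith

lemma exists_lipschitz_on_closedBall (R : PLQRepr ϑ) (hconv : ERealConvexOn ϑ)
    (hbot : ∀ y, ϑ y ≠ ⊥) (c : X) (ρ : ℝ) :
    ∃ ℓ, 0 ≤ ℓ ∧ ∀ y ∈ edom ϑ ∩ closedBall c ρ, ∀ z ∈ edom ϑ ∩ closedBall c ρ,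
      (ϑ y).toReal ≤ (ϑ z).toReal + ℓ * ‖y - z‖ := by
  set M := ‖c‖ + |ρ|
  have hM : ∀ u ∈ closedBall c ρ, ‖u‖ ≤ M := fun u hu =>
    (norm_le_of_mem_closedBall hu).trans (by linarith [le_abs_self ρ])
  refine ⟨∑ i, (2 * ‖R.A i‖ * M + ‖R.a i‖), by positivity, ?_⟩
  rintro y ⟨hy, hyc⟩ z ⟨hz, hzc⟩
  -- `ϑ` is quadratic on an initial piece of the segment from `y` to `z`
  have hseg : ∀ᶠ τ in 𝓝[>] (0:ℝ), y + τ • (z - y) ∈ edom ϑ := by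
    filter_upwards [Ioc_mem_nhdsGT one_pos] with τ hτ
    exact (hconv.add_smul_sub_ne_top_and_toReal_le hbot hy hz hτ.1.le hτ.2).1
  obtain ⟨i, hyi, hi⟩ := R.exists_piece_eventually_add_smul_mem
    (mem_tangentConeB_of_frequently ((tendsto_id.prodMk tendsto_const_nhds).frequently
      hseg.frequently))
  have hτ : ∀ᶠ τ in 𝓝[>] (0:ℝ), τ ∈ Ioc 0 1 ∧ y + τ • (z - y) ∈ R.piece i :=
    Filter.Eventually.and (Ioc_mem_nhdsGT one_pos)
      (hi.filter_mono (nhdsWithin_mono _ Ioi_subset_Ici_self))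
  obtain ⟨τ, ⟨hτ0, hτ1⟩, hτi⟩ := hτ.exists
  refine (R.toReal_le_add_of_add_smul_sub_mem_piece hconv hbot hy hz (hM y hyc) (hM z hzc) hyi
    hτ0 hτ1 hτi).trans (add_le_add le_rfl (mul_le_mul_of_nonneg_right ?_ (norm_nonneg _)))
  exact Finset.single_le_sum (f := fun j => 2 * ‖R.A j‖ * M + ‖R.a j‖)
    (fun j _ => by positivity) (Finset.mem_univ i)

lemma exists_eventually_toReal_le_of_subderiv_le (R : PLQRepr ϑ) (hconv : ERealConvexOn ϑ)
    (hbot : ∀ y, ϑ y ≠ ⊥) {y d : X} (hy : ϑ y ≠ ⊤) {L : ℝ} (hL : subderiv ϑ y d ≤ L) :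
    ∃ β : ℝ, ∀ᶠ τ in 𝓝[>] (0:ℝ),
      ϑ (y + τ • d) ≠ ⊤ ∧ (ϑ (y + τ • d)).toReal ≤ (ϑ y).toReal + τ * L + τ ^ 2 * β := by
  obtain ⟨i, hyi, hi⟩ := R.exists_piece_eventually_add_smul_mem
    (mem_tangentConeB_edom_of_subderiv_ne_top hy (hbot y)
      (ne_top_of_le_ne_top (EReal.coe_ne_top L) hL))
  set α := ⟪R.A i y + R.a i, d⟫
  set β := 1 / 2 * ⟪R.A i d, d⟫
  have hray : ∀ᶠ τ in 𝓝[>] (0:ℝ), ϑ (y + τ • d) ≠ ⊤ ∧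
      (ϑ (y + τ • d)).toReal = (ϑ y).toReal + τ * α + τ ^ 2 * β :=
    (hi.filter_mono (nhdsWithin_mono _ Ioi_subset_Ici_self)).mono fun τ hτ =>
      ⟨R.mem_edom_of_mem_piece hτ,
        by rw [R.toReal_eq_quad hτ, R.quad_add_smul, R.toReal_eq_quad hyi]⟩
  obtain ⟨ℓ, -, hlip⟩ := R.exists_lipschitz_on_closedBall hconv hbot y 1
  have hα : α ≤ L := EReal.coe_le_coe_iff.1
    ((coe_le_subderiv_of_lipschitz hbot hy hlip (hray.mono fun τ h => ⟨h.1, h.2.ge⟩)).trans hL)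
  refine ⟨β, ?_⟩
  filter_upwards [hray, self_mem_nhdsWithin] with τ hτ (hτ0 : 0 < τ)
  exact ⟨hτ.1, by rw [hτ.2]; nlinarith⟩

end PLQRepr

section Differentiability

variable {E F : Type*} [NormedAddCommGroup E] [NormedSpace ℝ E] [NormedAddCommGroup F]
  [NormedSpace ℝ F] {f : E → F} {x : E}

lemma TwiceDiffAt.exists_norm_fderiv_sub_le (hf : TwiceDiffAt f x) :
    ∃ δ > 0, ∃ C ≥ 0, ∀ u ∈ ball x δ,
      DifferentiableAt ℝ f u ∧ ‖fderiv ℝ f u - fderiv ℝ f x‖ ≤ C * ‖u - x‖ := by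
  obtain ⟨C, hC⟩ := hf.2.hasFDerivAt.isBigO_sub.bound
  obtain ⟨δ, hδ, h⟩ := Metric.eventually_nhds_iff_ball.1 (hf.1.and hC)
  refine ⟨δ, hδ, max C 0, le_max_right _ _, fun u hu => ⟨(h u hu).1, (h u hu).2.trans ?_⟩⟩
  gcongr
  exact le_max_left _ _

def chordDefect (f : E → F) (x y : E) (t : ℝ) : ℝ :=
  ‖f (x + t • (y - x)) - (f x + t • (f y - f x))‖

lemma tendsto_inv_mul_chordDefect (hx : DifferentiableAt ℝ f x) (y : E) :
    Tendsto (fun t : ℝ => t⁻¹ * chordDefect f x y t) (𝓝[>] 0)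
      (𝓝 ‖fderiv ℝ f x (y - x) - (f y - f x)‖) := by
  have hc : Tendsto (fun t : ℝ => ‖t⁻¹‖) (𝓝[>] 0) atTop :=
    tendsto_abs_atTop_atTop.comp tendsto_inv_nhdsGT_zero
  refine (((hx.hasFDerivAt.lim (y - x) hc).sub_const (f y - f x)).norm).congr' ?_
  filter_upwards [self_mem_nhdsWithin] with t (ht : 0 < t)
  rw [chordDefect, inv_inv, ← norm_smul_of_nonneg (inv_nonneg.2 ht.le)]
  congr 1
  simp only [smul_sub, smul_add, smul_smul, inv_mul_cancel₀ ht.ne', one_smul]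
  abel

lemma tendsto_chordDefect (hx : DifferentiableAt ℝ f x) (y : E) :
    Tendsto (chordDefect f x y) (𝓝[>] 0) (𝓝 0) := by
  have ht : Tendsto (fun t : ℝ => t) (𝓝[>] 0) (𝓝 0) := nhdsWithin_le_nhds
  refine (by simpa using ht.mul (tendsto_inv_mul_chordDefect hx y) :
    Tendsto (fun t => t * (t⁻¹ * chordDefect f x y t)) _ (𝓝 0)).congr' ?_
  filter_upwards [self_mem_nhdsWithin] with t (ht : 0 < t)
  rw [← mul_assoc, mul_inv_cancel₀ ht.ne', one_mul]

variable {δ C : ℝ}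

lemma norm_sub_sub_fderiv_le_of_norm_fderiv_sub_le
    (hder : ∀ u ∈ ball x δ, DifferentiableAt ℝ f u ∧ ‖fderiv ℝ f u - fderiv ℝ f x‖ ≤ C * ‖u - x‖)
    (hC : 0 ≤ C) {y : E} (hy : y ∈ ball x δ) :
    ‖f y - f x - fderiv ℝ f x (y - x)‖ ≤ C * ‖y - x‖ ^ 2 := by
  have hsub : closedBall x ‖y - x‖ ⊆ ball x δ :=
    closedBall_subset_ball (mem_ball_iff_norm.1 hy)
  have key := (convex_closedBall x ‖y - x‖).norm_image_sub_le_of_norm_fderiv_le'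
    (fun u hu => (hder u (hsub hu)).1)
    (fun u hu => (hder u (hsub hu)).2.trans
      (mul_le_mul_of_nonneg_left (mem_closedBall_iff_norm.1 hu) hC))
    (mem_closedBall_self (norm_nonneg _)) (mem_closedBall_iff_norm.2 le_rfl)
  rwa [mul_assoc, ← sq] at key

lemma norm_sub_le_of_norm_fderiv_sub_le
    (hder : ∀ u ∈ ball x δ, DifferentiableAt ℝ f u ∧ ‖fderiv ℝ f u - fderiv ℝ f x‖ ≤ C * ‖u - x‖)
    (hC : 0 ≤ C) {y z : E} (hy : y ∈ ball x δ)
    (hz : z ∈ ball x δ) : ‖f z - f y‖ ≤ (‖fderiv ℝ f x‖ + C * δ) * ‖z - y‖ := by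
  refine (convex_ball x δ).norm_image_sub_le_of_norm_fderiv_le (fun u hu => (hder u hu).1)
    (fun u hu => ?_) hy hz
  calc ‖fderiv ℝ f u‖ ≤ ‖fderiv ℝ f x‖ + ‖fderiv ℝ f u - fderiv ℝ f x‖ := norm_le_insert' _ _
    _ ≤ ‖fderiv ℝ f x‖ + C * δ := by
      gcongr
      exact (hder u hu).2.trans (by gcongr; exact (mem_ball_iff_norm.1 hu).le)

end Differentiability

section Subamenable

variable {E F : Type*} [NormedAddCommGroup E] [InnerProductSpace ℝ E] [NormedAddCommGroup F]
  [InnerProductSpace ℝ F] {f : E → F} {ϑ : F → EReal} {xb : E} {κ δ Lf Cf ℓ : ℝ}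

structure LocalBounds (f : E → F) (ϑ : F → EReal) (xb : E) (κ δ Lf Cf ℓ : ℝ) : Prop where
  pos : 0 < δ
  κ_nonneg : 0 ≤ κ
  Lf_nonneg : 0 ≤ Lf
  Cf_nonneg : 0 ≤ Cf
  ℓ_nonneg : 0 ≤ ℓ
  mem_edom : f xb ∈ edom ϑ
  differentiableAt : ∀ x ∈ ball xb δ, DifferentiableAt ℝ f x
  lipschitz_f : ∀ x ∈ ball xb δ, ∀ y ∈ ball xb δ, ‖f y - f x‖ ≤ Lf * ‖y - x‖
  taylor : ∀ y ∈ ball xb δ, ‖f y - f xb - fderiv ℝ f xb (y - xb)‖ ≤ Cf * ‖y - xb‖ ^ 2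
  mapsTo : ∀ x ∈ ball xb δ, f x ∈ ball (f xb) 1
  subregular : ∀ x ∈ ball xb δ, infDist x (f ⁻¹' edom ϑ) ≤ κ * infDist (f x) (edom ϑ)
  lipschitz_ϑ : ∀ y ∈ edom ϑ ∩ closedBall (f xb) 1, ∀ z ∈ edom ϑ ∩ closedBall (f xb) 1,
    (ϑ y).toReal ≤ (ϑ z).toReal + ℓ * ‖y - z‖

lemma exists_localBounds (hf : TwiceDiffAt f xb) (R : PLQRepr ϑ) (hconv : ERealConvexOn ϑ)
    (hbot : ∀ y, ϑ y ≠ ⊥) (hdom : ϑ (f xb) ≠ ⊤) (hmsqc : MSQCAt f (edom ϑ) xb κ) :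
    ∃ δ Lf Cf ℓ, LocalBounds f ϑ xb κ δ Lf Cf ℓ := by
  obtain ⟨δ₁, hδ₁, C, hC, hder⟩ := hf.exists_norm_fderiv_sub_le
  obtain ⟨ℓ, hℓ, hlip⟩ := R.exists_lipschitz_on_closedBall hconv hbot (f xb) 1
  have hcont : ContinuousAt f xb := (hder xb (mem_ball_self hδ₁)).1.continuousAt
  obtain ⟨δ₂, hδ₂, h₂⟩ := Metric.eventually_nhds_iff_ball.1
    (hmsqc.2.and (hcont.eventually_mem (ball_mem_nhds _ one_pos)))
  have h₁ : ball xb (min δ₁ δ₂) ⊆ ball xb δ₁ := ball_subset_ball (min_le_left _ _)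
  have h₂' : ball xb (min δ₁ δ₂) ⊆ ball xb δ₂ := ball_subset_ball (min_le_right _ _)
  exact ⟨min δ₁ δ₂, ‖fderiv ℝ f xb‖ + C * δ₁, C, ℓ,
    { pos := lt_min hδ₁ hδ₂
      κ_nonneg := hmsqc.1
      Lf_nonneg := by positivity
      Cf_nonneg := hC
      ℓ_nonneg := hℓ
      mem_edom := hdom
      differentiableAt := fun x hx => (hder x (h₁ hx)).1
      lipschitz_f := fun x hx y hy =>
        norm_sub_le_of_norm_fderiv_sub_le hder hC (h₁ hx) (h₁ hy)
      taylor := fun y hy => norm_sub_sub_fderiv_le_of_norm_fderiv_sub_le hder hC (h₁ hy)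
      mapsTo := fun x hx => (h₂ x (h₂' hx)).2
      subregular := fun x hx => (h₂ x (h₂' hx)).1
      lipschitz_ϑ := hlip }⟩

namespace LocalBounds

lemma exists_near_mem_preimage_edom (H : LocalBounds f ϑ xb κ δ Lf Cf ℓ) {p : E}
    (hp : p ∈ ball xb (δ / 2)) {c : F} (hc : c ∈ edom ϑ ∩ closedBall (f xb) 1) {s : ℝ}
    (hs : 0 < s) (hsmall : κ * ‖f p - c‖ + s ≤ δ / 2) :
    ∃ z, f z ∈ edom ϑ ∧ ‖z - p‖ ≤ κ * ‖f p - c‖ + s ∧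
      (ϑ (f z)).toReal ≤ (ϑ c).toReal + ℓ * ((Lf * κ + 1) * ‖f p - c‖ + Lf * s) := by
  have hpδ : p ∈ ball xb δ := ball_subset_ball (half_le_self H.pos.le) hp
  have hdist : infDist p (f ⁻¹' edom ϑ) < κ * ‖f p - c‖ + s := by
    calc infDist p (f ⁻¹' edom ϑ) ≤ κ * infDist (f p) (edom ϑ) := H.subregular p hpδ
      _ ≤ κ * ‖f p - c‖ := by
        gcongr
        · exact H.κ_nonneg
        · exact (infDist_le_dist_of_mem hc.1).trans_eq (dist_eq_norm _ _)
      _ < κ * ‖f p - c‖ + s := lt_add_of_pos_right _ hs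
  obtain ⟨z, hz, hzp⟩ := (infDist_lt_iff ⟨xb, H.mem_edom⟩).1 hdist
  rw [dist_comm, dist_eq_norm] at hzp
  have hzδ : z ∈ ball xb δ := by
    rw [mem_ball_iff_norm] at hp ⊢
    linarith [norm_sub_le_norm_sub_add_norm_sub z p xb]
  have hfz : ‖f z - c‖ ≤ Lf * ‖z - p‖ + ‖f p - c‖ :=
    (norm_sub_le_norm_sub_add_norm_sub _ _ _).trans
      (add_le_add (H.lipschitz_f p hpδ z hzδ) le_rfl)
  refine ⟨z, hz, hzp.le, (H.lipschitz_ϑ _ ⟨hz, ball_subset_closedBall (H.mapsTo z hzδ)⟩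
    c hc).trans ?_⟩
  have := mul_le_mul_of_nonneg_left hzp.le H.Lf_nonneg
  have := H.ℓ_nonneg
  nlinarith

lemma eventually_exists_near_chord (H : LocalBounds f ϑ xb κ δ Lf Cf ℓ)
    (hconv : ERealConvexOn ϑ) (hbot : ∀ y, ϑ y ≠ ⊥) {x y : E} (hx : x ∈ ball xb (δ / 2))
    (hy : y ∈ ball xb (δ / 2)) (hxT : ϑ (f x) ≠ ⊤) (hyT : ϑ (f y) ≠ ⊤) :
    ∀ᶠ t in 𝓝[>] (0:ℝ), ∃ z, f z ∈ edom ϑ ∧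
      ‖z - (x + t • (y - x))‖ ≤ κ * chordDefect f x y t + t ^ 2 ∧
      (ϑ (f z)).toReal ≤ (1 - t) * (ϑ (f x)).toReal + t * (ϑ (f y)).toReal +
        ℓ * ((Lf * κ + 1) * chordDefect f x y t + Lf * t ^ 2) := by
  have hxδ : x ∈ ball xb δ := ball_subset_ball (half_le_self H.pos.le) hx
  have hyδ : y ∈ ball xb δ := ball_subset_ball (half_le_self H.pos.le) hy
  have ht : Tendsto (fun t : ℝ => t) (𝓝[>] 0) (𝓝 0) := nhdsWithin_le_nhds
  have hseg : Tendsto (fun t : ℝ => x + t • (y - x)) (𝓝[>] 0) (𝓝 x) := by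
    simpa using tendsto_const_nhds.add (ht.smul_const (y - x))
  have hsmall : Tendsto (fun t => κ * chordDefect f x y t + t ^ 2) (𝓝[>] 0) (𝓝 0) := by
    simpa using ((tendsto_chordDefect (H.differentiableAt x hxδ) y).const_mul κ).add (ht.pow 2)
  filter_upwards [Ioc_mem_nhdsGT one_pos, hseg.eventually (isOpen_ball.mem_nhds hx),
    hsmall.eventually (ge_mem_nhds (half_pos H.pos))] with t ⟨ht0, ht1⟩ hmt hst
  obtain ⟨hcT, hcv⟩ := hconv.add_smul_sub_ne_top_and_toReal_le hbot hxT hyT ht0.le ht1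
  have hc1 : f x + t • (f y - f x) ∈ closedBall (f xb) 1 :=
    (convex_closedBall _ _).add_smul_sub_mem (ball_subset_closedBall (H.mapsTo x hxδ))
      (ball_subset_closedBall (H.mapsTo y hyδ)) ⟨ht0.le, ht1⟩
  obtain ⟨z, hzD, hzm, hzv⟩ :=
    H.exists_near_mem_preimage_edom hmt ⟨hcT, hc1⟩ (pow_pos ht0 2) hst
  exact ⟨z, hzD, hzm, hzv.trans (by rw [chordDefect]; linarith)⟩

lemma toReal_sub_eps_le_of_mem_frechetSubdiff (H : LocalBounds f ϑ xb κ δ Lf Cf ℓ)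
    (hconv : ERealConvexOn ϑ) (hbot : ∀ y, ϑ y ≠ ⊥) {x y : E} (hx : x ∈ ball xb (δ / 2))
    (hy : y ∈ ball xb (δ / 2)) (hxT : ϑ (f x) ≠ ⊤) (hyT : ϑ (f y) ≠ ⊤) {v : E}
    (hv : v ∈ frechetSubdiff (fun z => ϑ (f z)) x) {ε : ℝ} (hε : 0 < ε) :
    (ϑ (f x)).toReal + ⟪v, y - x⟫ -
      (ℓ * (Lf * κ + 1) + ‖v‖ * κ) * ‖fderiv ℝ f x (y - x) - (f y - f x)‖ -
      ε * (‖y - x‖ + κ * ‖fderiv ℝ f x (y - x) - (f y - f x)‖) ≤ (ϑ (f y)).toReal := by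
  have hxδ : x ∈ ball xb δ := ball_subset_ball (half_le_self H.pos.le) hx
  set e := ‖fderiv ℝ f x (y - x) - (f y - f x)‖
  set a := (ϑ (f x)).toReal
  set b := (ϑ (f y)).toReal
  set C := ℓ * (Lf * κ + 1) + ‖v‖ * κ
  obtain ⟨γ, hγ, hfre⟩ := Metric.eventually_nhds_iff_ball.1 (hv ε hε)
  set q : ℝ → ℝ := fun t => t⁻¹ * chordDefect f x y t
  have hq : Tendsto q (𝓝[>] 0) (𝓝 e) := tendsto_inv_mul_chordDefect (H.differentiableAt x hxδ) y
  have ht : Tendsto (fun t : ℝ => t) (𝓝[>] 0) (𝓝 0) := nhdsWithin_le_nhds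
  have hG : Tendsto (fun t => a + ⟪v, y - x⟫ - ‖v‖ * (κ * q t + t) -
      ε * (‖y - x‖ + κ * q t + t) - ℓ * ((Lf * κ + 1) * q t + Lf * t)) (𝓝[>] 0)
      (𝓝 (a + ⟪v, y - x⟫ - C * e - ε * (‖y - x‖ + κ * e))) := by
    convert ((tendsto_const_nhds.sub (((hq.const_mul κ).add ht).const_mul ‖v‖)).sub
      (((tendsto_const_nhds.add (hq.const_mul κ)).add ht).const_mul ε)).sub
      (((hq.const_mul (Lf * κ + 1)).add (ht.const_mul Lf)).const_mul ℓ) using 2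
    ring
  have hsmall :
      Tendsto (fun t => t * ‖y - x‖ + (κ * chordDefect f x y t + t ^ 2)) (𝓝[>] 0) (𝓝 0) := by
    simpa using (ht.mul_const _).add (((tendsto_chordDefect (H.differentiableAt x hxδ) y).const_mul
      κ).add (ht.pow 2))
  refine le_of_tendsto hG ?_
  filter_upwards [self_mem_nhdsWithin, H.eventually_exists_near_chord hconv hbot hx hy hxT hyT,
    hsmall.eventually (gt_mem_nhds hγ)] with t (ht0 : 0 < t) ⟨z, hzD, hzm, hzv⟩ hst
  -- the regular subgradient inequality at the corrected chord point `z`, divided by `t`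
  have hzx : z - x = t • (y - x) + (z - (x + t • (y - x))) := by abel
  have hzx' : ‖z - x‖ ≤ t * ‖y - x‖ + (κ * chordDefect f x y t + t ^ 2) := by
    rw [hzx]
    refine (norm_add_le _ _).trans ?_
    rw [norm_smul, Real.norm_of_nonneg ht0.le]
    exact add_le_add le_rfl hzm
  have hfz : ϑ (f x) + _ ≤ ϑ (f z) := hfre z (mem_ball_iff_norm.2 (hzx'.trans_lt hst))
  rw [← EReal.coe_toReal hxT (hbot _), ← EReal.coe_toReal hzD (hbot _), ← EReal.coe_add,
    EReal.coe_le_coe_iff] at hfz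
  have hin : t * ⟪v, y - x⟫ - ‖v‖ * (κ * chordDefect f x y t + t ^ 2) ≤ ⟪v, z - x⟫ := by
    rw [hzx, inner_add_right, real_inner_smul_right]
    have := (neg_abs_le _).trans' (neg_le_neg ((abs_real_inner_le_norm v _).trans
      (mul_le_mul_of_nonneg_left hzm (norm_nonneg v))))
    linarith
  have hεz := mul_le_mul_of_nonneg_left hzx' hε.le
  have hηq : chordDefect f x y t = t * q t := by simp [q, ← mul_assoc, mul_inv_cancel₀ ht0.ne']
  rw [hηq] at hzv hin hεz
  rw [← mul_le_mul_iff_of_pos_left ht0]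
  linear_combination hfz + hzv + hin + hεz

lemma toReal_le_of_mem_frechetSubdiff (H : LocalBounds f ϑ xb κ δ Lf Cf ℓ)
    (hconv : ERealConvexOn ϑ) (hbot : ∀ y, ϑ y ≠ ⊥) {x y : E} (hx : x ∈ ball xb (δ / 2))
    (hy : y ∈ ball xb (δ / 2)) (hxT : ϑ (f x) ≠ ⊤) (hyT : ϑ (f y) ≠ ⊤) {v : E}
    (hv : v ∈ frechetSubdiff (fun z => ϑ (f z)) x) :
    (ϑ (f x)).toReal + ⟪v, y - x⟫ -
      (ℓ * (Lf * κ + 1) + ‖v‖ * κ) * ‖fderiv ℝ f x (y - x) - (f y - f x)‖ ≤ (ϑ (f y)).toReal := by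
  refine le_of_tendsto (x := 𝓝[>] 0) ?_ (eventually_mem_nhdsWithin.mono fun ε (hε : 0 < ε) =>
    H.toReal_sub_eps_le_of_mem_frechetSubdiff hconv hbot hx hy hxT hyT hv hε)
  refine (Continuous.tendsto' ?_ 0 _ (by simp)).mono_left nhdsWithin_le_nhds
  fun_prop

lemma toReal_le_of_mem_limSubdiff (H : LocalBounds f ϑ xb κ δ Lf Cf ℓ) (hf : TwiceDiffAt f xb)
    (hconv : ERealConvexOn ϑ) (hbot : ∀ y, ϑ y ≠ ⊥) {v : E}
    (hv : v ∈ limSubdiff (fun x => ϑ (f x)) xb) {y : E} (hy : y ∈ ball xb (δ / 2))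
    (hyT : ϑ (f y) ≠ ⊤) :
    (ϑ (f xb)).toReal + ⟪v, y - xb⟫ -
      (ℓ * (Lf * κ + 1) + ‖v‖ * κ) * ‖fderiv ℝ f xb (y - xb) - (f y - f xb)‖ ≤
        (ϑ (f y)).toReal := by
  obtain ⟨xk, vk, hxk, hφk, hvk, hfrk⟩ := hv
  have hf' : Tendsto (fun k => fderiv ℝ f (xk k)) atTop (𝓝 (fderiv ℝ f xb)) :=
    hf.2.continuousAt.tendsto.comp hxk
  have hfk : Tendsto (fun k => f (xk k)) atTop (𝓝 (f xb)) :=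
    (H.differentiableAt xb (mem_ball_self H.pos)).continuousAt.tendsto.comp hxk
  have hdefect : Tendsto (fun k => ‖fderiv ℝ f (xk k) (y - xk k) - (f y - f (xk k))‖) atTop
      (𝓝 ‖fderiv ℝ f xb (y - xb) - (f y - f xb)‖) :=
    (((isBoundedBilinearMap_apply.continuous.tendsto _).comp
      (hf'.prodMk_nhds (tendsto_const_nhds.sub hxk))).sub (tendsto_const_nhds.sub hfk)).norm
  refine le_of_tendsto_of_tendsto (((((EReal.tendsto_toReal H.mem_edom (hbot _)).comp
    hφk).add (hvk.inner (tendsto_const_nhds.sub hxk))).sub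
    (((tendsto_const_nhds.add (hvk.norm.mul_const κ))).mul hdefect))) tendsto_const_nhds ?_
  filter_upwards [hxk.eventually (isOpen_ball.mem_nhds (mem_ball_self (half_pos H.pos))),
    hφk.eventually_ne H.mem_edom] with k hk hkT
  exact H.toReal_le_of_mem_frechetSubdiff hconv hbot hk hy hkT hyT (hfrk k)

lemma limSubdiff_subset_proxSubdiff (H : LocalBounds f ϑ xb κ δ Lf Cf ℓ)
    (hf : TwiceDiffAt f xb) (hconv : ERealConvexOn ϑ) (hbot : ∀ y, ϑ y ≠ ⊥) :
    limSubdiff (fun x => ϑ (f x)) xb ⊆ proxSubdiff (fun x => ϑ (f x)) xb := by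
  intro v hv
  set C := ℓ * (Lf * κ + 1) + ‖v‖ * κ
  have hC : 0 ≤ C := by
    have := H.κ_nonneg; have := H.Lf_nonneg; have := H.ℓ_nonneg
    positivity
  refine ⟨2 * C * Cf + 1, by have := H.Cf_nonneg; positivity, δ / 2, half_pos H.pos,
    fun y hy => ?_⟩
  by_cases hyT : ϑ (f y) = ⊤
  · simp [hyT]
  have hTay : ‖fderiv ℝ f xb (y - xb) - (f y - f xb)‖ ≤ Cf * ‖y - xb‖ ^ 2 := by
    rw [← norm_neg, neg_sub]
    exact H.taylor y (ball_subset_ball (half_le_self H.pos.le) hy)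
  have := H.toReal_le_of_mem_limSubdiff hf hconv hbot hv hy hyT
  have := mul_le_mul_of_nonneg_left hTay hC
  show ϑ (f xb) + _ ≤ ϑ (f y)
  rw [← EReal.coe_toReal H.mem_edom (hbot _), ← EReal.coe_toReal hyT (hbot _), ← EReal.coe_add,
    EReal.coe_le_coe_iff]
  nlinarith [sq_nonneg ‖y - xb‖]

lemma eventually_exists_near_ray (H : LocalBounds f ϑ xb κ δ Lf Cf ℓ) {w : E} {L β : ℝ}
    (hray : ∀ᶠ τ in 𝓝[>] (0:ℝ), ϑ (f xb + τ • fderiv ℝ f xb w) ≠ ⊤ ∧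
      (ϑ (f xb + τ • fderiv ℝ f xb w)).toReal ≤ (ϑ (f xb)).toReal + τ * L + τ ^ 2 * β) :
    ∀ᶠ τ in 𝓝[>] (0:ℝ), ∃ z, f z ∈ edom ϑ ∧
      ‖z - (xb + τ • w)‖ ≤ (κ * Cf * ‖w‖ ^ 2 + 1) * τ ^ 2 ∧
      (ϑ (f z)).toReal ≤ (ϑ (f xb)).toReal + τ * L +
        τ ^ 2 * (β + ℓ * ((Lf * κ + 1) * (Cf * ‖w‖ ^ 2) + Lf)) := by
  set A := fderiv ℝ f xb
  have ht : Tendsto (fun τ : ℝ => τ) (𝓝[>] 0) (𝓝 0) := nhdsWithin_le_nhds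
  have hp : Tendsto (fun τ : ℝ => xb + τ • w) (𝓝[>] 0) (𝓝 xb) := by
    simpa using tendsto_const_nhds.add (ht.smul_const w)
  have hc : Tendsto (fun τ : ℝ => f xb + τ • A w) (𝓝[>] 0) (𝓝 (f xb)) := by
    simpa using tendsto_const_nhds.add (ht.smul_const (A w))
  have hsmall : Tendsto (fun τ : ℝ => (κ * Cf * ‖w‖ ^ 2 + 1) * τ ^ 2) (𝓝[>] 0) (𝓝 0) := by
    simpa using (ht.pow 2).const_mul _
  filter_upwards [self_mem_nhdsWithin, hray, hp.eventually (isOpen_ball.mem_nhds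
    (mem_ball_self (half_pos H.pos))), hc.eventually (closedBall_mem_nhds _ one_pos),
    hsmall.eventually (ge_mem_nhds (half_pos H.pos))] with τ (hτ : 0 < τ) ⟨hcT, hcv⟩ hpδ hc1 hsm
  have hTay : ‖f (xb + τ • w) - (f xb + τ • A w)‖ ≤ Cf * ‖w‖ ^ 2 * τ ^ 2 := by
    have := H.taylor _ (ball_subset_ball (half_le_self H.pos.le) hpδ)
    rw [add_sub_cancel_left, norm_smul, Real.norm_of_nonneg hτ.le, map_smul, sub_sub] at this
    linarith
  have hκ := mul_le_mul_of_nonneg_left hTay H.κ_nonneg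
  have hℓ : 0 ≤ ℓ * (Lf * κ + 1) :=
    mul_nonneg H.ℓ_nonneg (add_nonneg (mul_nonneg H.Lf_nonneg H.κ_nonneg) zero_le_one)
  have hℓ' := mul_le_mul_of_nonneg_left hTay hℓ
  obtain ⟨z, hzD, hzp, hzv⟩ := H.exists_near_mem_preimage_edom hpδ ⟨hcT, hc1⟩ (pow_pos hτ 2)
    (by nlinarith)
  exact ⟨z, hzD, by nlinarith, by nlinarith⟩

lemma secondSubderiv_ne_top (H : LocalBounds f ϑ xb κ δ Lf Cf ℓ) (hbot : ∀ y, ϑ y ≠ ⊥)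
    {v w : E} {β : ℝ} (hray : ∀ᶠ τ in 𝓝[>] (0:ℝ), ϑ (f xb + τ • fderiv ℝ f xb w) ≠ ⊤ ∧
      (ϑ (f xb + τ • fderiv ℝ f xb w)).toReal ≤ (ϑ (f xb)).toReal + τ * ⟪v, w⟫ + τ ^ 2 * β) :
    secondSubderiv (fun x => ϑ (f x)) xb v w ≠ ⊤ := by
  set M := κ * Cf * ‖w‖ ^ 2 + 1
  set K := β + ℓ * ((Lf * κ + 1) * (Cf * ‖w‖ ^ 2) + Lf)
  refine ne_top_of_le_ne_top (EReal.coe_ne_top (2 * (K + ‖v‖ * M)))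
    (liminf_le_of_eventually_exists (M := M) ?_)
  filter_upwards [self_mem_nhdsWithin, H.eventually_exists_near_ray hray]
    with τ (hτ : 0 < τ) ⟨z, hzD, hzp, hzv⟩
  have hz : xb + τ • (τ⁻¹ • (z - xb)) = z := by
    rw [smul_inv_smul₀ hτ.ne', add_sub_cancel]
  have hu : ‖τ⁻¹ • (z - xb) - w‖ ≤ M * τ := by
    rw [show τ⁻¹ • (z - xb) - w = τ⁻¹ • (z - (xb + τ • w)) by
      simp only [smul_sub, smul_add, inv_smul_smul₀ hτ.ne']; abel, norm_smul,
      Real.norm_of_nonneg (inv_nonneg.2 hτ.le), inv_mul_le_iff₀ hτ]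
    linarith
  have hin : ⟪v, w⟫ - ⟪v, τ⁻¹ • (z - xb)⟫ ≤ ‖v‖ * (M * τ) := by
    rw [← inner_sub_right]
    refine (le_abs_self _).trans ((abs_real_inner_le_norm _ _).trans ?_)
    rw [norm_sub_rev]
    gcongr
  refine ⟨τ⁻¹ • (z - xb), hu, ?_⟩
  show quadDiff _ xb v τ (τ⁻¹ • (z - xb)) ≤ _
  rw [quadDiff_eq_coe (φ := fun x => ϑ (f x)) (by rwa [hz]) (hbot _) H.mem_edom (hbot _), hz,
    EReal.coe_le_coe_iff, div_mul_eq_mul_div, div_le_iff₀ (by positivity)]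
  nlinarith [mul_le_mul_of_nonneg_left hin hτ.le]

end LocalBounds

end Subamenable

/-- for fully subamenable functions, limiting and proximal subgradients
coincide and the domain of the second subderivative is the critical cone. -/
theorem stmt10 {n m : ℕ} (f : Euc n → Euc m) (ϑ : Euc m → EReal) (xb : Euc n)
    (hf : TwiceDiffAt f xb) (hbot : ∀ y, ϑ y ≠ ⊥) (hplq : IsPLQ ϑ)
    (hconv : ERealConvexOn ϑ) (hdom : ϑ (f xb) ≠ ⊤)
    (κ : ℝ) (hmsqc : MSQCAt f (edom ϑ) xb κ)
    (vb : Euc n) (hv : vb ∈ limSubdiff (fun x => ϑ (f x)) xb) :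
    limSubdiff (fun x => ϑ (f x)) xb = proxSubdiff (fun x => ϑ (f x)) xb ∧
    {w : Euc n | secondSubderiv (fun x => ϑ (f x)) xb vb w ≠ ⊤} =
      critCone (fun x => ϑ (f x)) xb vb := by
  obtain ⟨R⟩ := hplq
  obtain ⟨δ, Lf, Cf, ℓ, H⟩ := exists_localBounds hf R hconv hbot hdom hmsqc
  have hlimprox := H.limSubdiff_subset_proxSubdiff hf hconv hbot
  refine ⟨hlimprox.antisymm ((proxSubdiff_subset_frechetSubdiff _ _).trans
    (frechetSubdiff_subset_limSubdiff _ _)), Set.ext fun w => ⟨fun hw => ?_, fun hw => ?_⟩⟩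
  · exact le_antisymm (subderiv_le_inner_of_secondSubderiv_ne_top (fun _ => hbot _) hdom hw)
      (inner_le_subderiv_of_mem_proxSubdiff (fun _ => hbot _) hdom (hlimprox hv) w)
  · obtain ⟨β, hray⟩ := R.exists_eventually_toReal_le_of_subderiv_le hconv hbot hdom
      ((subderiv_le_subderiv_comp (H.differentiableAt xb (mem_ball_self H.pos)) w).trans
        (le_of_eq hw))
    exact H.secondSubderiv_ne_top hbot hray
end
end

section
/- Under the assumptions of the equality chain rule (f strictly differentiable at x̄; ϑ convex, l.s.c. near f(x̄), and Lipschitz relative to its domain with constant ℓ; x ↦ f(x) − dom ϑ metrically subregular at (x̄,0) with constant κ): for every v ∈ ∂(ϑ∘f)(x̄) there exists λ ∈ ∂ϑ(f(x̄)) with v = ∇f(x̄)*λ and ‖λ‖ ≤ ℓ + κ‖v‖ + κℓ‖∇f(x̄)‖. -/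
open Filter Topology Metric Set

noncomputable section

/-!
Let `vₖ ∈ ∂̂(ϑ ∘ f)(xₖ)` with `xₖ → x̄` and `vₖ → v`. Near `xₖ`, the Fréchet inequality for `vₖ`,
metric subregularity and the Lipschitz continuity of `ϑ` on its domain give an exact penalty bound
for the linearized problem: for small `(h, z)`,
`ϑ (f xₖ) + ⟪vₖ, h⟫ - α ‖h‖ ≤ ϑ (f xₖ + z) + ρ ‖∇f(x̄) h - z‖`
with `ρ ≈ ℓ + κ (‖v‖ + ℓ ‖∇f(x̄)‖)` and `α ≈ 0` (strict differentiability at `x̄` controls the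
linearization error). The problem is convex in `(h, z)`, so separating `(0, ϑ (f xₖ))` from the
strict epigraph of its perturbation function produces a multiplier `λₖ ∈ ∂ϑ(f xₖ)` with
`‖λₖ‖ ≤ ρ` and `‖vₖ - ∇f(x̄)* λₖ‖ ≤ α`. A cluster point of `(λₖ)` is the required `λ`.
-/

open scoped InnerProductSpace NNReal

lemma ERealConvexOn.convexOn_toReal {X : Type*} [AddCommGroup X] [Module ℝ X] {φ : X → EReal}
    (hφ : ERealConvexOn φ) (hbot : ∀ x, φ x ≠ ⊥) : ConvexOn ℝ (edom φ) fun x => (φ x).toReal := by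
  have key : ∀ x ∈ edom φ, ∀ y ∈ edom φ, ∀ a b : ℝ, 0 ≤ a → 0 ≤ b → a + b = 1 →
      φ (a • x + b • y) ≤ Real.toEReal (a * (φ x).toReal + b * (φ y).toReal) := by
    intro x hx y hy a b ha hb hab
    obtain rfl : b = 1 - a := by linarith
    have h := hφ x y a ha (by linarith)
    rw [← EReal.coe_toReal hx (hbot x), ← EReal.coe_toReal hy (hbot y)] at h
    exact_mod_cast h
  refine ⟨fun x hx y hy a b ha hb hab => ?_, fun x hx y hy a b ha hb hab => ?_⟩
  · exact ne_top_of_le_ne_top (EReal.coe_ne_top _) (key x hx y hy a b ha hb hab)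
  · simpa only [EReal.toReal_coe, smul_eq_mul] using
      EReal.toReal_le_toReal (key x hx y hy a b ha hb hab) (hbot _) (EReal.coe_ne_top _)

lemma exists_lt_add_inner_of_isOpen_of_convex {Y : Type*} [NormedAddCommGroup Y]
    [InnerProductSpace ℝ Y] [CompleteSpace Y] {C : Set (Y × ℝ)} (hCo : IsOpen C) (hCc : Convex ℝ C)
    {c t₀ : ℝ} (hc : ((0 : Y), c) ∉ C) (ht₀ : ((0 : Y), t₀) ∈ C) (hct₀ : c < t₀) :
    ∃ lam : Y, ∀ p ∈ C, c < p.2 + ⟪lam, p.1⟫_ℝ := by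
  obtain ⟨g, hg⟩ := geometric_hahn_banach_point_open hCc hCo hc
  have hsplit : ∀ p : Y × ℝ, g p = g (p.1, 0) + p.2 * g (0, 1) := fun p => by
    rw [← smul_eq_mul, ← map_smul, ← map_add]; simp
  set a := g (0, 1)
  have ha : 0 < a := by
    have h := hg _ ht₀
    rw [hsplit, hsplit (0, t₀)] at h
    simp only [Prod.mk_zero_zero, map_zero, zero_add] at h
    nlinarith
  refine ⟨(InnerProductSpace.toDual ℝ Y).symm (a⁻¹ • g.comp (ContinuousLinearMap.inl ℝ Y ℝ)),
    fun p hp => ?_⟩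
  have h := hg p hp
  rw [hsplit, hsplit p] at h
  simp only [Prod.mk_zero_zero, map_zero, zero_add] at h
  rw [InnerProductSpace.toDual_symm_apply]
  simp only [smul_apply, ContinuousLinearMap.comp_apply, ContinuousLinearMap.inl_apply,
    smul_eq_mul]
  rw [← sub_lt_iff_lt_add', inv_mul_eq_div, lt_div_iff₀ ha]
  linarith

theorem exists_multiplier_of_exact_penalty {P Y : Type*} [AddCommGroup P] [Module ℝ P]
    [NormedAddCommGroup Y] [InnerProductSpace ℝ Y] [CompleteSpace Y]
    {S : Set P} {ψ : P → ℝ} (hψ : ConvexOn ℝ S ψ) (L : P →ₗ[ℝ] Y) {ρ : ℝ} (hρ : 0 ≤ ρ)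
    {p₀ : P} (hp₀ : p₀ ∈ S) (hLp₀ : L p₀ = 0) (hpen : ∀ p ∈ S, ψ p₀ ≤ ψ p + ρ * ‖L p‖) :
    ∃ lam : Y, ‖lam‖ ≤ ρ ∧ ∀ p ∈ S, ψ p₀ ≤ ψ p + ⟪lam, L p⟫_ℝ := by
  set F : P × Y → ℝ := fun q => ψ q.1 + ρ * ‖L q.1 - q.2‖
  have hF : ConvexOn ℝ (S ×ˢ univ) F := by
    have h₁ := hψ.comp_linearMap (LinearMap.fst ℝ P Y)
    have h₂ := ((convexOn_norm convex_univ).comp_linearMap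
      (L ∘ₗ LinearMap.fst ℝ P Y - LinearMap.snd ℝ P Y)).smul hρ
    rw [LinearMap.coe_fst, ← Set.prod_univ] at h₁
    exact h₁.add (h₂.subset (subset_univ _) h₁.1)
  -- the strict epigraph of the value function `w ↦ inf_{p ∈ S} F (p, w)`
  set C : Set (Y × ℝ) :=
    LinearMap.prodMap (LinearMap.snd ℝ P Y) LinearMap.id '' {q | q.1 ∈ S ×ˢ univ ∧ F q.1 < q.2}
  have hCc : Convex ℝ C := hF.convex_strict_epigraph.linear_image _
  have hmem : ∀ p ∈ S, ∀ w t, F (p, w) < t → (w, t) ∈ C := fun p hp w t h =>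
    ⟨((p, w), t), ⟨⟨hp, trivial⟩, h⟩, rfl⟩
  have hCo : IsOpen C := by
    refine isOpen_iff_forall_mem_open.2 ?_
    rintro _ ⟨⟨⟨p, w⟩, t⟩, ⟨⟨hp, -⟩, hlt⟩, rfl⟩
    exact ⟨{x | F (p, x.1) < x.2}, fun x hx => hmem p hp x.1 x.2 hx,
      isOpen_lt (by simp only [F]; fun_prop) continuous_snd, hlt⟩
  have hc : ((0 : Y), ψ p₀) ∉ C := by
    rintro ⟨⟨⟨p, w⟩, t⟩, ⟨⟨hp, -⟩, hlt⟩, he⟩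
    simp only [LinearMap.prodMap_apply, LinearMap.snd_apply, LinearMap.id_coe, id_eq,
      Prod.mk.injEq] at he
    obtain ⟨rfl, rfl⟩ := he
    have := hpen p hp
    simp only [F, sub_zero] at hlt
    linarith
  obtain ⟨lam, hlam⟩ := exists_lt_add_inner_of_isOpen_of_convex hCo hCc hc
    (hmem p₀ hp₀ 0 (ψ p₀ + 1) (by simp [F, hLp₀])) (lt_add_one _)
  have hdual : ∀ p ∈ S, ∀ w, ψ p₀ ≤ F (p, w) + ⟪lam, w⟫_ℝ := fun p hp w =>
    le_of_forall_pos_lt_add fun ε hε => by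
      have := hlam _ (hmem p hp w (F (p, w) + ε) (lt_add_of_pos_right _ hε))
      simp only at this
      linarith
  refine ⟨lam, ?_, fun p hp => by simpa [F] using hdual p hp (L p)⟩
  have h := hdual p₀ hp₀ (-lam)
  simp only [F, hLp₀, zero_sub, neg_neg, inner_neg_right, real_inner_self_eq_norm_sq] at h
  nlinarith [norm_nonneg lam]

section Normed

variable {X Y : Type*} [NormedAddCommGroup X] [NormedAddCommGroup Y]

lemma MSQCAt.eventually {f : X → Y} {D : Set Y} {x : X} {κ : ℝ} (h : MSQCAt f D x κ) :
    ∀ᶠ x' in 𝓝 x, MSQCAt f D x' κ :=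
  h.2.eventually_nhds.mono fun _ h' => ⟨h.1, h'⟩

lemma LipRelDom.eventually {φ : X → EReal} {x : X} {ℓ : ℝ} (h : LipRelDom φ x ℓ) :
    ∀ᶠ x' in 𝓝 x, LipRelDom φ x' ℓ := by
  obtain ⟨U, hU, hUφ⟩ := h
  exact (eventually_mem_nhds_iff.2 hU).mono fun _ hU' => ⟨U, hU', hUφ⟩

lemma LipRelDom.toReal_le {φ : X → EReal} {x : X} {ℓ : ℝ} (h : LipRelDom φ x ℓ)
    (hbot : ∀ y, φ y ≠ ⊥) : ∃ U ∈ 𝓝 x, ∀ y ∈ U ∩ edom φ, ∀ y' ∈ U ∩ edom φ,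
      (φ y).toReal ≤ (φ y').toReal + ℓ * ‖y - y'‖ := by
  obtain ⟨U, hU, hUφ⟩ := h
  refine ⟨U, hU, fun y ⟨hyU, hy⟩ y' ⟨hy'U, hy'⟩ => ?_⟩
  have h := hUφ y hyU y' hy'U hy hy'
  rw [← EReal.coe_toReal hy (hbot y), ← EReal.coe_toReal hy' (hbot y')] at h
  exact_mod_cast h

lemma ApproximatesLinearOn.norm_sub_le [NormedSpace ℝ X] [NormedSpace ℝ Y] {f : X → Y}
    {f' : X →L[ℝ] Y} {s : Set X} {c : ℝ≥0} (hf : ApproximatesLinearOn f f' s c) {u u' : X}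
    (hu : u ∈ s) (hu' : u' ∈ s) :
    ‖f u - f u'‖ ≤ (‖f'‖ + c) * ‖u - u'‖ :=
  calc ‖f u - f u'‖ = ‖(f u - f u' - f' (u - u')) + f' (u - u')‖ := by rw [sub_add_cancel]
    _ ≤ c * ‖u - u'‖ + ‖f'‖ * ‖u - u'‖ := norm_add_le_of_le (hf u hu u' hu') (f'.le_opNorm _)
    _ = (‖f'‖ + c) * ‖u - u'‖ := by ring

lemma le_add_mul_norm_add_mul_norm_of_le_comp {f : X → Y} {D : Set Y} {θ : Y → ℝ} {q : X → ℝ}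
    {s : Set X} {V : Set Y} {ℓ K M : ℝ} (hf : ∀ u ∈ s, ∀ u' ∈ s, ‖f u - f u'‖ ≤ M * ‖u - u'‖)
    (hθ : ∀ y ∈ V ∩ D, ∀ y' ∈ V ∩ D, θ y ≤ θ y' + ℓ * ‖y - y'‖)
    (hq : ∀ u u', q u ≤ q u' + K * ‖u - u'‖) (hℓ : 0 ≤ ℓ) {u u' : X} {y : Y} (hu : u ∈ s)
    (hu' : u' ∈ s) (hfu' : f u' ∈ V ∩ D) (hy : y ∈ V ∩ D) (hqu' : q u' ≤ θ (f u')) :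
    q u ≤ θ y + ℓ * ‖f u - y‖ + (K + ℓ * M) * ‖u - u'‖ := by
  have hfu'y : ‖f u' - y‖ ≤ ‖f u - y‖ + M * ‖u - u'‖ := by
    calc ‖f u' - y‖ ≤ ‖f u' - f u‖ + ‖f u - y‖ := norm_sub_le_norm_sub_add_norm_sub _ _ _
      _ ≤ ‖f u - y‖ + M * ‖u - u'‖ := by rw [norm_sub_rev u]; linarith [hf u' hu' u hu]
  calc q u ≤ θ (f u') + K * ‖u - u'‖ := by linarith [hq u u']
    _ ≤ θ y + ℓ * ‖f u' - y‖ + K * ‖u - u'‖ := by linarith [hθ _ hfu' _ hy]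
    _ ≤ θ y + ℓ * (‖f u - y‖ + M * ‖u - u'‖) + K * ‖u - u'‖ := by gcongr
    _ = θ y + ℓ * ‖f u - y‖ + (K + ℓ * M) * ‖u - u'‖ := by ring

theorem eventually_le_add_mul_norm_of_msqc {f : X → Y} {D : Set Y} {θ : Y → ℝ} {q : X → ℝ}
    {x₀ : X} {s : Set X} {V : Set Y} {κ ℓ K M ρ : ℝ}
    (hD : f x₀ ∈ D) (hsub : MSQCAt f D x₀ κ) (hs : s ∈ 𝓝 x₀)
    (hf : ∀ u ∈ s, ∀ u' ∈ s, ‖f u - f u'‖ ≤ M * ‖u - u'‖)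
    (hV : V ∈ 𝓝 (f x₀)) (hθ : ∀ y ∈ V ∩ D, ∀ y' ∈ V ∩ D, θ y ≤ θ y' + ℓ * ‖y - y'‖)
    (hq : ∀ u u', q u ≤ q u' + K * ‖u - u'‖) (hqθ : ∀ᶠ u in 𝓝 x₀, f u ∈ D → q u ≤ θ (f u))
    (hℓ : 0 ≤ ℓ) (hK : 0 ≤ K) (hM : 0 ≤ M) (hρ : ℓ + κ * (K + ℓ * M) ≤ ρ) :
    ∀ᶠ p in 𝓝 (x₀, f x₀), p.2 ∈ D → q p.1 ≤ θ p.2 + ρ * ‖f p.1 - p.2‖ := by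
  obtain ⟨hκ, hsub⟩ := hsub
  have hfc : ContinuousAt f x₀ := by
    obtain ⟨r, hr, hrs⟩ := Metric.mem_nhds_iff.1 hs
    refine continuousAt_of_locally_lipschitz hr M fun u hu => ?_
    simpa only [dist_eq_norm] using hf u (hrs hu) x₀ (mem_of_mem_nhds hs)
  obtain ⟨r, hr, hgood⟩ := Metric.eventually_nhds_iff_ball.1
    (((eventually_mem_set.2 hs).and (hfc.preimage_mem_nhds hV)).and hqθ)
  have hsmall :
      Tendsto (fun p : X × Y => ‖p.1 - x₀‖ + κ * ‖f p.1 - p.2‖) (𝓝 (x₀, f x₀)) (𝓝 0) := by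
    have : ContinuousAt (fun p : X × Y => ‖p.1 - x₀‖ + κ * ‖f p.1 - p.2‖) (x₀, f x₀) := by
      have hfc' := hfc.comp (continuousAt_fst (p := (x₀, f x₀)))
      fun_prop
    simpa using this.tendsto
  filter_upwards [hsmall.eventually_lt_const (half_pos hr), continuousAt_fst.eventually hsub,
    continuousAt_snd.preimage_mem_nhds hV] with ⟨u, y⟩ hclose hsubu hyV hy
  dsimp only at hclose hsubu hyV hy ⊢
  set β := ‖f u - y‖
  have hκβ : 0 ≤ κ * β := by positivity
  have hu : u ∈ ball x₀ r := by rw [mem_ball, dist_eq_norm]; linarith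
  have hβ : infDist u (f ⁻¹' D) ≤ κ * β :=
    hsubu.trans (mul_le_mul_of_nonneg_left ((infDist_le_dist_of_mem hy).trans_eq
      (dist_eq_norm _ _)) hκ)
  -- pass through a point `u' ∈ f⁻¹' D` within `κ β + η` of `u`, then let `η → 0`
  have key : ∀ η ∈ Ioo 0 (r / 2), q u ≤ θ y + ℓ * β + (K + ℓ * M) * (κ * β + η) := by
    rintro η ⟨hη, hηr⟩
    obtain ⟨u', hu'D, hu'⟩ := (infDist_lt_iff ⟨x₀, hD⟩).1 (hβ.trans_lt (lt_add_of_pos_right _ hη))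
    have hu'r : u' ∈ ball x₀ r := by
      rw [mem_ball] at hu ⊢
      have := dist_triangle u' u x₀
      rw [dist_comm u' u, dist_eq_norm u x₀] at this
      linarith
    obtain ⟨⟨hu's, hfu'V⟩, hqu'⟩ := hgood u' hu'r
    calc q u ≤ θ y + ℓ * β + (K + ℓ * M) * ‖u - u'‖ :=
          le_add_mul_norm_add_mul_norm_of_le_comp hf hθ hq hℓ (hgood u hu).1.1 hu's
            ⟨hfu'V, hu'D⟩ ⟨hyV, hy⟩ (hqu' hu'D)
      _ ≤ θ y + ℓ * β + (K + ℓ * M) * (κ * β + η) := by rw [← dist_eq_norm]; gcongr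
  have hlim := (((continuous_const_add (κ * β)).const_mul (K + ℓ * M)).const_add
    (θ y + ℓ * β) |>.tendsto 0).mono_left (nhdsWithin_le_nhds (s := Ioi 0))
  calc q u ≤ θ y + ℓ * β + (K + ℓ * M) * (κ * β + 0) :=
        ge_of_tendsto hlim (mem_of_superset (Ioo_mem_nhdsGT (half_pos hr)) key)
    _ = θ y + (ℓ + κ * (K + ℓ * M)) * β := by ring
    _ ≤ θ y + ρ * β := by gcongr

end Normed

section Inner

variable {X Y : Type*} [NormedAddCommGroup X] [InnerProductSpace ℝ X] [NormedAddCommGroup Y]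
  [InnerProductSpace ℝ Y]

lemma mem_frechetSubdiff_of_eventually_le {φ : X → EReal} {x v : X}
    (h : ∀ᶠ y in 𝓝 x, φ x + ((⟪v, y - x⟫_ℝ : ℝ) : EReal) ≤ φ y) : v ∈ frechetSubdiff φ x :=
  fun _ hε => h.mono fun _ hy => le_trans (add_le_add le_rfl (EReal.coe_le_coe_iff.2
    (sub_le_self _ (mul_nonneg hε.le (norm_nonneg _))))) hy

lemma norm_le_of_eventually_inner_le {u : X} {α : ℝ} (hα : 0 ≤ α)
    (h : ∀ᶠ x in 𝓝 0, ⟪u, x⟫_ℝ ≤ α * ‖x‖) : ‖u‖ ≤ α := by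
  have hlim : Tendsto (fun t : ℝ => t • u) (𝓝[>] 0) (𝓝 0) := by
    simpa using ((continuous_id.smul continuous_const).tendsto 0).mono_left
      (nhdsWithin_le_nhds (s := Ioi (0 : ℝ))) (f := fun t : ℝ => t • u)
  obtain ⟨t, ht, ht0⟩ := ((hlim.eventually h).and self_mem_nhdsWithin).exists
  rw [inner_smul_right, real_inner_self_eq_norm_sq, norm_smul, Real.norm_of_nonneg ht0.le] at ht
  have : ‖u‖ ^ 2 ≤ α * ‖u‖ := by nlinarith
  nlinarith [norm_nonneg u]

theorem eventually_linearized_penalty {f : X → Y} {ϑ : Y → EReal} {x₀ : X} {f' : X →L[ℝ] Y}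
    {s : Set X} {δ : ℝ≥0} (hs : s ∈ 𝓝 x₀) (hf : ApproximatesLinearOn f f' s δ)
    (hbot : ∀ y, ϑ y ≠ ⊥) (hfin : ϑ (f x₀) ≠ ⊤) {ℓ κ ρ : ℝ} (hl : 0 ≤ ℓ)
    (hlip : LipRelDom ϑ (f x₀) ℓ) (hmsqc : MSQCAt f (edom ϑ) x₀ κ)
    {w : X} (hw : w ∈ frechetSubdiff (fun x => ϑ (f x)) x₀) {ε : ℝ} (hε : 0 < ε)
    (hρ : ℓ + κ * (‖w‖ + ε + ℓ * (‖f'‖ + δ)) ≤ ρ) :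
    ∀ᶠ p in 𝓝 (0 : X × Y), f x₀ + p.2 ∈ edom ϑ →
      (ϑ (f x₀)).toReal + ⟪w, p.1⟫_ℝ - (ε + ρ * δ) * ‖p.1‖ ≤
        (ϑ (f x₀ + p.2)).toReal + ρ * ‖f' p.1 - p.2‖ := by
  set c := (ϑ (f x₀)).toReal
  set q : X → ℝ := fun u => c + (⟪w, u - x₀⟫_ℝ - ε * ‖u - x₀‖)
  have hq : ∀ u u', q u ≤ q u' + (‖w‖ + ε) * ‖u - u'‖ := by
    intro u u'
    have h₁ : ⟪w, u - x₀⟫_ℝ - ⟪w, u' - x₀⟫_ℝ ≤ ‖w‖ * ‖u - u'‖ := by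
      rw [← inner_sub_right, sub_sub_sub_cancel_right]; exact real_inner_le_norm _ _
    have h₂ : ‖u' - x₀‖ - ‖u - x₀‖ ≤ ‖u - u'‖ := by
      simpa [norm_sub_rev u u'] using norm_sub_norm_le (u' - x₀) (u - x₀)
    simp only [q]
    nlinarith
  have hqθ : ∀ᶠ u in 𝓝 x₀, f u ∈ edom ϑ → q u ≤ (ϑ (f u)).toReal := by
    filter_upwards [hw ε hε] with u hu hfu
    rw [← EReal.coe_toReal hfin (hbot _), ← EReal.coe_add] at hu
    simpa only [EReal.toReal_coe] using EReal.toReal_le_toReal hu (EReal.coe_ne_bot _) hfu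
  obtain ⟨V, hV, hθ⟩ := hlip.toReal_le hbot
  have hpen := eventually_le_add_mul_norm_of_msqc hfin hmsqc hs
    (fun u hu u' hu' => hf.norm_sub_le hu hu') hV hθ hq hqθ hl (by positivity) (by positivity) hρ
  have hρ₀ : 0 ≤ ρ := le_trans (by have := hmsqc.1; positivity) hρ
  have hT : Tendsto (fun p : X × Y => (x₀ + p.1, f x₀ + p.2)) (𝓝 0) (𝓝 (x₀, f x₀)) := by
    simpa using ((continuous_const.add continuous_fst).prodMk
      (continuous_const.add continuous_snd)).tendsto (0 : X × Y)
  filter_upwards [hT.eventually hpen, hT.eventually (prod_mem_nhds hs univ_mem)]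
    with ⟨h, z⟩ hp hps hdom
  have hlin : ‖f (x₀ + h) - (f x₀ + z)‖ ≤ ‖f' h - z‖ + δ * ‖h‖ := by
    have := hf (x₀ + h) hps.1 x₀ (mem_of_mem_nhds hs)
    rw [add_sub_cancel_left] at this
    calc ‖f (x₀ + h) - (f x₀ + z)‖ = ‖(f (x₀ + h) - f x₀ - f' h) + (f' h - z)‖ := by
          congr 1; abel
      _ ≤ ‖f' h - z‖ + δ * ‖h‖ := by linarith [norm_add_le (f (x₀ + h) - f x₀ - f' h) (f' h - z)]
  have := hp hdom
  simp only [q, add_sub_cancel_left] at this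
  nlinarith [mul_le_mul_of_nonneg_left hlin hρ₀]

theorem exists_local_multiplier [CompleteSpace Y] {ϑ : Y → EReal} (hconv : ERealConvexOn ϑ)
    (hbot : ∀ y, ϑ y ≠ ⊥) {y₀ : Y} (hfin : ϑ y₀ ≠ ⊤) (T : X →L[ℝ] Y) {w : X} {α ρ : ℝ}
    (hα : 0 ≤ α) (hρ : 0 ≤ ρ) {r : ℝ} (hr : 0 < r)
    (hpen : ∀ p ∈ ball (0 : X × Y) r, y₀ + p.2 ∈ edom ϑ →
      (ϑ y₀).toReal + ⟪w, p.1⟫_ℝ - α * ‖p.1‖ ≤ (ϑ (y₀ + p.2)).toReal + ρ * ‖T p.1 - p.2‖) :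
    ∃ lam : Y, ‖lam‖ ≤ ρ ∧ ∀ p ∈ ball (0 : X × Y) r, y₀ + p.2 ∈ edom ϑ →
      (ϑ y₀).toReal + ⟪w, p.1⟫_ℝ - α * ‖p.1‖ ≤ (ϑ (y₀ + p.2)).toReal + ⟪lam, T p.1 - p.2⟫_ℝ := by
  set S : Set (X × Y) := ball 0 r ∩ {p | y₀ + p.2 ∈ edom ϑ}
  set ψ : X × Y → ℝ := fun p => (ϑ (y₀ + p.2)).toReal + (α * ‖p.1‖ - ⟪w, p.1⟫_ℝ)
  have hψ : ConvexOn ℝ S ψ := by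
    have h₁ := ((hconv.convexOn_toReal hbot).translate_right y₀).comp_linearMap
      (LinearMap.snd ℝ X Y)
    have h₂ := (((convexOn_norm convex_univ).smul hα).sub
      ((innerₛₗ ℝ w).concaveOn convex_univ)).comp_linearMap (LinearMap.fst ℝ X Y)
    have hS : Convex ℝ S := (convex_ball 0 r).inter h₁.1
    exact (h₁.subset inter_subset_right hS).add (h₂.subset (subset_univ _) hS)
  set L : X × Y →ₗ[ℝ] Y := T.toLinearMap ∘ₗ LinearMap.fst ℝ X Y - LinearMap.snd ℝ X Y
  have hψ₀ : ψ 0 = (ϑ y₀).toReal := by simp [ψ]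
  obtain ⟨lam, hlam, hmul⟩ := exists_multiplier_of_exact_penalty hψ L hρ (p₀ := 0)
    ⟨mem_ball_self hr, by simpa [edom] using hfin⟩ (map_zero L) fun p hp => by
      change ψ 0 ≤ (ϑ (y₀ + p.2)).toReal + (α * ‖p.1‖ - ⟪w, p.1⟫_ℝ) + ρ * ‖T p.1 - p.2‖
      linarith [hpen p hp.1 hp.2]
  refine ⟨lam, hlam, fun p hp hpdom => ?_⟩
  have : ψ 0 ≤ (ϑ (y₀ + p.2)).toReal + (α * ‖p.1‖ - ⟪w, p.1⟫_ℝ) + ⟪lam, T p.1 - p.2⟫_ℝ :=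
    hmul p ⟨hp, hpdom⟩
  linarith

theorem exists_mem_frechetSubdiff_of_linearized_penalty [CompleteSpace X] [CompleteSpace Y]
    {ϑ : Y → EReal} (hconv : ERealConvexOn ϑ) (hbot : ∀ y, ϑ y ≠ ⊥) {y₀ : Y} (hfin : ϑ y₀ ≠ ⊤)
    (T : X →L[ℝ] Y) {w : X} {α ρ : ℝ} (hα : 0 ≤ α) (hρ : 0 ≤ ρ)
    (hloc : ∀ᶠ p in 𝓝 (0 : X × Y), y₀ + p.2 ∈ edom ϑ →
      (ϑ y₀).toReal + ⟪w, p.1⟫_ℝ - α * ‖p.1‖ ≤ (ϑ (y₀ + p.2)).toReal + ρ * ‖T p.1 - p.2‖) :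
    ∃ lam ∈ frechetSubdiff ϑ y₀, ‖lam‖ ≤ ρ ∧ ‖w - ContinuousLinearMap.adjoint T lam‖ ≤ α := by
  obtain ⟨r, hr, hball⟩ := Metric.eventually_nhds_iff_ball.1 hloc
  obtain ⟨lam, hlam, hmul⟩ := exists_local_multiplier hconv hbot hfin T hα hρ hr hball
  refine ⟨lam, mem_frechetSubdiff_of_eventually_le ?_, hlam, norm_le_of_eventually_inner_le hα ?_⟩
  · filter_upwards [ball_mem_nhds y₀ hr] with y hy
    by_cases hyt : ϑ y = ⊤
    · simp [hyt]
    have := hmul (0, y - y₀) (by simpa [dist_eq_norm] using hy) (by simpa [edom] using hyt)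
    simp only [inner_zero_right, add_zero, norm_zero, mul_zero, sub_zero, add_sub_cancel,
      map_zero, zero_sub, inner_neg_right] at this
    rw [← EReal.coe_toReal hfin (hbot _), ← EReal.coe_toReal hyt (hbot _), ← EReal.coe_add,
      EReal.coe_le_coe_iff]
    linarith
  · filter_upwards [ball_mem_nhds (0 : X) hr] with h hh
    have := hmul (h, 0) (by simpa using hh) (by simpa [edom] using hfin)
    simp only [add_zero, sub_zero] at this
    rw [inner_sub_left, ContinuousLinearMap.adjoint_inner_left]
    linarith

theorem exists_mem_limSubdiff_of_approx [ProperSpace Y] {ϑ : Y → EReal} (A : Y →L[ℝ] X)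
    {y : ℕ → Y} {y₀ : Y} (hy : Tendsto y atTop (𝓝 y₀))
    (hϑy : Tendsto (fun k => ϑ (y k)) atTop (𝓝 (ϑ y₀))) {v : ℕ → X} {v₀ : X}
    (hv : Tendsto v atTop (𝓝 v₀)) {R : ℝ}
    (happrox : ∀ ε > 0, ∀ᶠ k in atTop,
      ∃ lam ∈ frechetSubdiff ϑ (y k), ‖lam‖ ≤ R + ε ∧ ‖v k - A lam‖ ≤ ε) :
    ∃ lam ∈ limSubdiff ϑ y₀, v₀ = A lam ∧ ‖lam‖ ≤ R := by
  have hseq : ∀ j : ℕ, ∃ k, j ≤ k ∧ ∃ lam ∈ frechetSubdiff ϑ (y k),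
      ‖lam‖ ≤ R + 1 / (j + 1) ∧ ‖v k - A lam‖ ≤ 1 / (j + 1) := fun j =>
    ((happrox _ Nat.one_div_pos_of_nat).and (eventually_ge_atTop j)).exists.imp
      fun _ hk => ⟨hk.2, hk.1⟩
  choose k hk lam hlam hR hA using hseq
  have hbdd : ∀ j, lam j ∈ closedBall (0 : Y) (R + 1) := fun j => by
    have : (1 : ℝ) / (j + 1) ≤ 1 := by simpa using Nat.one_div_le_one_div (α := ℝ) (Nat.zero_le j)
    rw [mem_closedBall_zero_iff]
    linarith [hR j]
  obtain ⟨l, -, φ, hφ, hl⟩ := tendsto_subseq_of_bounded isBounded_closedBall hbdd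
  have hkφ : Tendsto (k ∘ φ) atTop atTop :=
    tendsto_atTop_mono (fun j => (hφ.id_le j).trans (hk _)) tendsto_id
  have hε : Tendsto (fun j => (1 : ℝ) / (φ j + 1)) atTop (𝓝 0) :=
    tendsto_one_div_add_atTop_nhds_zero_nat.comp hφ.tendsto_atTop
  refine ⟨l, ⟨y ∘ k ∘ φ, lam ∘ φ, hy.comp hkφ, hϑy.comp hkφ, hl, fun j => hlam _⟩, ?_, ?_⟩
  · have h₀ : Tendsto (fun j => v (k (φ j)) - A (lam (φ j))) atTop (𝓝 0) :=
      squeeze_zero_norm (fun j => hA (φ j)) hε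
    have h₁ : Tendsto (fun j => v (k (φ j)) - A (lam (φ j))) atTop (𝓝 (v₀ - A l)) :=
      (hv.comp hkφ).sub ((A.continuous.tendsto l).comp hl)
    exact sub_eq_zero.1 (tendsto_nhds_unique h₁ h₀)
  · simpa using le_of_tendsto_of_tendsto' hl.norm (tendsto_const_nhds.add hε) fun j => hR (φ j)

theorem eventually_exists_approx_multiplier [CompleteSpace X] [CompleteSpace Y] {f : X → Y}
    {ϑ : Y → EReal} {x₀ : X} {f' : X →L[ℝ] Y} (hf : HasStrictFDerivAt f f' x₀)
    (hbot : ∀ y, ϑ y ≠ ⊥) (hconv : ERealConvexOn ϑ) {ℓ κ : ℝ} (hl : 0 ≤ ℓ)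
    (hlip : LipRelDom ϑ (f x₀) ℓ) (hmsqc : MSQCAt f (edom ϑ) x₀ κ)
    {x : ℕ → X} (hx : Tendsto x atTop (𝓝 x₀)) (hfin : ∀ᶠ k in atTop, ϑ (f (x k)) ≠ ⊤)
    {w : ℕ → X} {v : X} (hw : Tendsto w atTop (𝓝 v))
    (hwsub : ∀ k, w k ∈ frechetSubdiff (fun x => ϑ (f x)) (x k)) {ε : ℝ} (hε : 0 < ε) :
    ∀ᶠ k in atTop, ∃ lam ∈ frechetSubdiff ϑ (f (x k)),
      ‖lam‖ ≤ ℓ + κ * ‖v‖ + κ * ℓ * ‖f'‖ + ε ∧ ‖w k - ContinuousLinearMap.adjoint f' lam‖ ≤ ε := by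
  have hκ := hmsqc.1
  set ρ := ℓ + κ * ‖v‖ + κ * ℓ * ‖f'‖ + ε
  have hD : 0 < 1 + ρ + κ * (2 + ℓ) := by positivity
  set η := ε / (1 + ρ + κ * (2 + ℓ))
  have hη : 0 < η := div_pos hε hD
  have hηD : η * (1 + ρ + κ * (2 + ℓ)) = ε := div_mul_cancel₀ _ hD.ne'
  have hρ₀ : 0 ≤ ρ := by positivity
  have hκη : κ * (2 + ℓ) * η ≤ ε := by nlinarith [mul_nonneg hη.le hρ₀]
  have hρη : η + ρ * η ≤ ε := by
    nlinarith [mul_nonneg (mul_nonneg hκ (by positivity : 0 ≤ 2 + ℓ)) hη.le]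
  obtain ⟨s, hs, hfs⟩ := hf.approximates_deriv_on_nhds (c := ⟨η, hη.le⟩) (Or.inr hη)
  have hfx : Tendsto (fun k => f (x k)) atTop (𝓝 (f x₀)) := hf.continuousAt.tendsto.comp hx
  filter_upwards [hx.eventually (eventually_mem_nhds_iff.2 hs), hx.eventually hmsqc.eventually,
    hfx.eventually hlip.eventually, hfin,
    hw.norm.eventually (eventually_le_nhds (lt_add_of_pos_right ‖v‖ hη))]
    with k hsk hmk hlk hfk hwk
  have hρk : ℓ + κ * (‖w k‖ + η + ℓ * (‖f'‖ + η)) ≤ ρ := by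
    calc _ ≤ ℓ + κ * (‖v‖ + η + η + ℓ * (‖f'‖ + η)) := by gcongr
      _ = ℓ + κ * ‖v‖ + κ * ℓ * ‖f'‖ + κ * (2 + ℓ) * η := by ring
      _ ≤ ρ := by linarith
  obtain ⟨lam, hlam, hnorm, hadj⟩ := exists_mem_frechetSubdiff_of_linearized_penalty hconv hbot
    hfk f' (by positivity) (by positivity)
    (eventually_linearized_penalty hsk hfs hbot hfk hl hlk hmk (hwsub k) hη hρk)
  exact ⟨lam, hlam, hnorm, hadj.trans hρη⟩

end Inner

theorem stmt12_general {n m : ℕ} (f : Euc n → Euc m) (ϑ : Euc m → EReal) (xb : Euc n)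
    (f' : Euc n →L[ℝ] Euc m) (hf : HasStrictFDerivAt f f' xb)
    (hbot : ∀ y, ϑ y ≠ ⊥) (hconv : ERealConvexOn ϑ) (hfin : ϑ (f xb) ≠ ⊤)
    (ℓ : ℝ) (hl : 0 ≤ ℓ) (hlip : LipRelDom ϑ (f xb) ℓ)
    (κ : ℝ) (hmsqc : MSQCAt f (edom ϑ) xb κ) :
    ∀ v ∈ limSubdiff (fun x => ϑ (f x)) xb,
      ∃ lam ∈ limSubdiff ϑ (f xb),
        v = ContinuousLinearMap.adjoint f' lam ∧
        ‖lam‖ ≤ ℓ + κ * ‖v‖ + κ * ℓ * ‖f'‖ := by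
  rintro v ⟨x, w, hx, hϑx, hw, hwsub⟩
  have hfx : Tendsto (fun k => f (x k)) atTop (𝓝 (f xb)) := hf.continuousAt.tendsto.comp hx
  exact exists_mem_limSubdiff_of_approx _ hfx hϑx hw fun ε hε =>
    eventually_exists_approx_multiplier hf hbot hconv hl hlip hmsqc hx
      (hϑx.eventually (eventually_ne_nhds hfin)) hw hwsub hε

/-- bounded multipliers under metric subregularity. -/
theorem stmt12 {n m : ℕ} (f : Euc n → Euc m) (ϑ : Euc m → EReal) (xb : Euc n)
    (f' : Euc n →L[ℝ] Euc m) (hf : HasStrictFDerivAt f f' xb)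
    (hbot : ∀ y, ϑ y ≠ ⊥) (hconv : ERealConvexOn ϑ) (hfin : ϑ (f xb) ≠ ⊤)
    (hlsc : ∃ U ∈ 𝓝 (f xb), ∀ y ∈ U, LowerSemicontinuousAt ϑ y)
    (ℓ : ℝ) (hl : 0 ≤ ℓ) (hlip : LipRelDom ϑ (f xb) ℓ)
    (κ : ℝ) (hmsqc : MSQCAt f (edom ϑ) xb κ) :
    ∀ v ∈ limSubdiff (fun x => ϑ (f x)) xb,
      ∃ lam ∈ limSubdiff ϑ (f xb),
        v = ContinuousLinearMap.adjoint f' lam ∧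
        ‖lam‖ ≤ ℓ + κ * ‖v‖ + κ * ℓ * ‖f'‖ :=
  stmt12_general f ϑ xb f' hf hbot hconv hfin ℓ hl hlip κ hmsqc
end
end
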